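/- arXiv:2107.00850 — 8 statements merged into one kernel-verified Lean document; each statement's English description precedes it below -/
import Mathlib

section
/- Let (Ω, μ) be a probability space, ν ≪ μ with density ρ = dν/dμ, and L = E_ν[log ρ(Y)] the KL-divergence of μ from ν. Then for every t > 0, P_ν(log ρ(Y) ≥ L + t) ≤ (L + 2)/(L + t). -/
/-!
Markov's inequality applied to the positive part `(log ρ)⁺` gives
`(L + t) · P_ν(log ρ ≥ L + t) ≤ E_ν[(log ρ)⁺] = L + E_ν[(log ρ)⁻]`. The negative part is small
because `ρ (log ρ)⁻ ≤ 1`, so `E_ν[(log ρ)⁻] = E_μ[ρ (log ρ)⁻] ≤ 1`; and `L + t > 0` since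
`L ≥ 0` by Gibbs' inequality.
-/

open MeasureTheory

lemma Real.mul_max_neg_log_zero_le_one {r : ℝ} (hr : 0 ≤ r) : r * max (-Real.log r) 0 ≤ 1 := by
  have h := Real.negMulLog_le_one_sub_self hr
  rw [Real.negMulLog, neg_mul] at h
  rw [mul_max_of_nonneg _ _ hr, mul_zero, mul_neg]
  exact max_le (by linarith) zero_le_one

section LogLikelihoodRatio

variable {Ω : Type*} [MeasurableSpace Ω] {μ ν : Measure Ω} [IsFiniteMeasure μ] [SigmaFinite ν]

lemma integral_negPart_llr_le_measureReal_univ (hν : ν ≪ μ) :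
    ∫ x, max (-llr ν μ x) 0 ∂ν ≤ μ.real Set.univ := by
  rw [← integral_toReal_rnDeriv_mul hν]
  calc ∫ x, (ν.rnDeriv μ x).toReal * max (-llr ν μ x) 0 ∂μ ≤ ∫ _, (1 : ℝ) ∂μ :=
        integral_mono_of_nonneg
          (Filter.Eventually.of_forall fun _ => mul_nonneg ENNReal.toReal_nonneg (le_max_right _ _))
          (integrable_const 1)
          (Filter.Eventually.of_forall fun _ => Real.mul_max_neg_log_zero_le_one ENNReal.toReal_nonneg)
    _ = μ.real Set.univ := by simp

lemma integral_posPart_llr_le (hν : ν ≪ μ) (hint : Integrable (llr ν μ) ν) :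
    ∫ x, max (llr ν μ x) 0 ∂ν ≤ ∫ x, llr ν μ x ∂ν + μ.real Set.univ := by
  have hsplit : (fun x => max (llr ν μ x) 0) = fun x => llr ν μ x + max (-llr ν μ x) 0 := by
    funext x
    linarith [max_zero_sub_eq_self (llr ν μ x)]
  rw [hsplit, integral_add hint hint.neg_part]
  linarith [integral_negPart_llr_le_measureReal_univ hν]

end LogLikelihoodRatio

/-- Markov-type tail bound for the log-density: if `L = E_ν[log ρ]` with `ρ = dν/dμ`,
then for every `t > 0`, `P_ν(log ρ ≥ L + t) ≤ (L+2)/(L+t)`. -/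
theorem log_rnDeriv_tail_bound
    {Ω : Type*} [MeasurableSpace Ω] (μ ν : Measure Ω)
    [IsProbabilityMeasure μ] [IsProbabilityMeasure ν] (hν : ν ≪ μ)
    (hint : Integrable (fun x => Real.log ((ν.rnDeriv μ x).toReal)) ν)
    (L : ℝ) (hL : L = ∫ x, Real.log ((ν.rnDeriv μ x).toReal) ∂ν)
    (t : ℝ) (ht : 0 < t) :
    (ν {x | L + t ≤ Real.log ((ν.rnDeriv μ x).toReal)}).toReal ≤ (L + 2) / (L + t) := by
  change Integrable (llr ν μ) ν at hint
  change L = ∫ x, llr ν μ x ∂ν at hL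
  change ν.real {x | L + t ≤ llr ν μ x} ≤ _
  have hL_nonneg : 0 ≤ L := by
    simpa [← hL] using InformationTheory.integral_llr_add_sub_measure_univ_nonneg hν hint
  rw [le_div_iff₀ (by linarith), mul_comm]
  calc (L + t) * ν.real {x | L + t ≤ llr ν μ x}
      ≤ (L + t) * ν.real {x | L + t ≤ max (llr ν μ x) 0} := by
        gcongr with x
        · exact measure_ne_top ν _
        · exact le_max_left _ _
    _ ≤ ∫ x, max (llr ν μ x) 0 ∂ν :=
        mul_meas_ge_le_integral_of_nonneg
          (Filter.Eventually.of_forall fun x => le_max_right _ _) hint.pos_part (L + t)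
    _ ≤ L + 1 := by simpa [← hL] using integral_posPart_llr_le hν hint
    _ ≤ L + 2 := by linarith
end

section
/- Let G be a λ-dense bipartite graph on parts of size n (all degrees exceeding (1/2 + λ)n with λ ∈ (0, 1/2)), and suppose G has at least one perfect matching. For an edge e of G, let P_e be the probability that e is contained in a uniformly random perfect matching of G. Then P_e ≤ 1/(λn). -/
/-
Fix a perfect matching `M` containing `xy`. For every `y'` adjacent to `x` whose `M`-partner
`M⁻¹ y'` is adjacent to `y`, switching `M` along the 4-cycle `x y M⁻¹y' y'` gives another perfect
matching, and `M` together with `y'` can be read back from the switched matching. Since `x` and `y`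
both have more than `(1/2 + λ)n` neighbours, there are more than `2λn` such `y'`; hence the
perfect matchings containing `xy` are at most a `1/(λn)` fraction of all of them.
-/

open Finset Equiv

namespace Equiv.Perm

theorem card_filter_comp_perm {α : Type*} [Fintype α] (M : Perm α) (p : α → Prop)
    [DecidablePred p] : #(univ.filter fun a => p (M a)) = #(univ.filter p) :=
  card_bij' (fun a _ => M a) (fun b _ => M⁻¹ b) (by simp) (by simp) (by simp) (by simp)

theorem swap_mul_injOn_sigma {α : Type*} [DecidableEq α] {x y : α} {E : Finset (Perm α)}
    (hE : ∀ M ∈ E, M x = y) (S : Perm α → Finset α) :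
    Set.InjOn (fun p : Σ _ : Perm α, α => swap y p.2 * p.1) (E.sigma S) := by
  rintro ⟨M, a⟩ hMa ⟨N, b⟩ hNb heq
  simp only [coe_sigma, Set.mem_sigma_iff, mem_coe] at hMa hNb heq
  obtain rfl : a = b := by
    simpa [hE M hMa.1, hE N hNb.1] using congrArg (· x) heq
  rw [mul_left_cancel heq]

variable {α : Type*} [Fintype α] [DecidableEq α] (A : α → α → Prop) [DecidableRel A]

def perfectMatchings : Finset (Perm α) := univ.filter fun M => ∀ i, A i (M i)

def swapPartners (M : Perm α) (x y : α) : Finset α :=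
  univ.filter fun y' => A x y' ∧ A (M⁻¹ y') y

variable {A}

theorem card_add_card_le_card_swapPartners_add (M : Perm α) (x y : α) :
    #(univ.filter (A x)) + #(univ.filter (A · y)) ≤ #(swapPartners A M x y) + Fintype.card α := by
  rw [← card_filter_comp_perm M⁻¹ (A · y), ← card_inter_add_card_union]
  gcongr
  · exact fun a ha => by simpa [swapPartners] using ha
  · exact card_le_univ _

theorem swap_mul_mem_perfectMatchings {M : Perm α} (hM : M ∈ perfectMatchings A) {x y y' : α}
    (hMx : M x = y) (hy' : y' ∈ swapPartners A M x y) :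
    swap y y' * M ∈ perfectMatchings A := by
  simp only [perfectMatchings, swapPartners, mem_filter, mem_univ, true_and] at hM hy' ⊢
  intro i
  rw [mul_apply]
  rcases eq_or_ne (M i) y with hy | hy
  · obtain rfl : i = x := M.injective (hy.trans hMx.symm)
    simpa [hy] using hy'.1
  rcases eq_or_ne (M i) y' with hy'' | hy''
  · obtain rfl : i = M⁻¹ y' := by simp [← hy'']
    simpa [hy''] using hy'.2
  · rw [swap_apply_of_ne_of_ne hy hy'']
    exact hM i

theorem sum_card_swapPartners_le_card_perfectMatchings (x y : α) :
    ∑ M ∈ (perfectMatchings A).filter (· x = y), #(swapPartners A M x y) ≤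
      #(perfectMatchings A) := by
  rw [← card_sigma]
  refine card_le_card_of_injOn _ ?_ (swap_mul_injOn_sigma (fun M hM => (mem_filter.1 hM).2) _)
  rintro ⟨M, y'⟩ h
  simp only [coe_sigma, Set.mem_sigma_iff, mem_coe, mem_filter] at h
  exact swap_mul_mem_perfectMatchings h.1.1 h.1.2 h.2

theorem card_mul_card_add_card_le (x y : α) :
    #((perfectMatchings A).filter (· x = y)) * (#(univ.filter (A x)) + #(univ.filter (A · y))) ≤
      #(perfectMatchings A) + #((perfectMatchings A).filter (· x = y)) * Fintype.card α := by
  calc _ ≤ ∑ M ∈ (perfectMatchings A).filter (· x = y),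
          (#(swapPartners A M x y) + Fintype.card α) := by
        rw [← smul_eq_mul, ← sum_const]
        exact sum_le_sum fun M _ => card_add_card_le_card_swapPartners_add M x y
    _ ≤ _ := by
        rw [sum_add_distrib, sum_const, smul_eq_mul]
        gcongr
        exact sum_card_swapPartners_le_card_perfectMatchings x y

end Equiv.Perm

open Equiv.Perm in
theorem dense_bipartite_matching_marginal_upper_general
    (n : ℕ) (lam : ℝ) (hlam : 0 < lam)
    (A : Fin n → Fin n → Prop)
    (hrow : ∀ x : Fin n, ((1 / 2 + lam) * n : ℝ) < Nat.card {y : Fin n // A x y})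
    (hcol : ∀ y : Fin n, ((1 / 2 + lam) * n : ℝ) < Nat.card {x : Fin n // A x y})
    (x y : Fin n) :
    (Nat.card {M : Equiv.Perm (Fin n) // (∀ i, A i (M i)) ∧ M x = y} : ℝ) /
        Nat.card {M : Equiv.Perm (Fin n) // ∀ i, A i (M i)}
      ≤ 1 / (lam * n) := by
  classical
  set P := perfectMatchings A
  set E := P.filter (· x = y)
  have hE : Nat.card {M : Perm (Fin n) // (∀ i, A i (M i)) ∧ M x = y} = #E := by
    simp only [E, P, perfectMatchings, Nat.card_eq_fintype_card, Fintype.card_subtype,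
      filter_filter]
    congr
  have hP : Nat.card {M : Perm (Fin n) // ∀ i, A i (M i)} = #P := by
    simp only [P, perfectMatchings, Nat.card_eq_fintype_card, Fintype.card_subtype]
    congr
  have hx := hrow x
  have hy := hcol y
  simp only [Nat.card_eq_fintype_card, Fintype.card_subtype] at hx hy
  have hcount : (#E * (#(univ.filter (A x)) + #(univ.filter (A · y))) : ℝ) ≤ #P + #E * n := by
    exact_mod_cast Fintype.card_fin n ▸ card_mul_card_add_card_le x y
  have hln : 0 < lam * n := mul_pos hlam (by exact_mod_cast x.pos)
  have hmarginal : #E * (lam * n) ≤ (#P : ℝ) := by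
    nlinarith [Nat.cast_nonneg (α := ℝ) #E]
  rw [hE, hP]
  refine div_le_of_le_mul₀ (by positivity) (by positivity) ?_
  rwa [one_div_mul_eq_div, le_div_iff₀ hln]

/-- Upper bound on matching marginals in λ-dense bipartite graphs: the probability that a
fixed edge `(x,y)` lies in a uniformly random perfect matching is at most `1/(λn)`. -/
theorem dense_bipartite_matching_marginal_upper
    (n : ℕ) (lam : ℝ) (hlam : 0 < lam) (hlam' : lam < 1 / 2)
    (A : Fin n → Fin n → Prop)
    (hrow : ∀ x : Fin n, ((1 / 2 + lam) * n : ℝ) < Nat.card {y : Fin n // A x y})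
    (hcol : ∀ y : Fin n, ((1 / 2 + lam) * n : ℝ) < Nat.card {x : Fin n // A x y})
    (hPM : Nonempty {M : Equiv.Perm (Fin n) // ∀ i, A i (M i)})
    (x y : Fin n) (hxy : A x y) :
    (Nat.card {M : Equiv.Perm (Fin n) // (∀ i, A i (M i)) ∧ M x = y} : ℝ) /
        Nat.card {M : Equiv.Perm (Fin n) // ∀ i, A i (M i)}
      ≤ 1 / (lam * n) :=
  dense_bipartite_matching_marginal_upper_general n lam hlam A hrow hcol x y
end

section
/- Let G be a λ-dense bipartite graph on parts of size n (all degrees exceeding (1/2 + λ)n with λ ∈ (0, 1/2)) having at least one perfect matching, and let e be an edge of G. Then the probability P_e that e lies in a uniformly random perfect matching satisfies P_e ≥ λ/(2n(λ+1)). -/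
open Finset

set_option maxHeartbeats 1000000 in
/-- Lower bound on matching marginals in λ-dense bipartite graphs: the probability that a
fixed edge `(x,y)` lies in a uniformly random perfect matching is at least `λ/(2n(λ+1))`. -/
theorem dense_bipartite_matching_marginal_lower
    (n : ℕ) (lam : ℝ) (hlam : 0 < lam) (hlam' : lam < 1 / 2)
    (A : Fin n → Fin n → Prop)
    (hrow : ∀ x : Fin n, ((1 / 2 + lam) * n : ℝ) < Nat.card {y : Fin n // A x y})
    (hcol : ∀ y : Fin n, ((1 / 2 + lam) * n : ℝ) < Nat.card {x : Fin n // A x y})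
    (hPM : Nonempty {M : Equiv.Perm (Fin n) // ∀ i, A i (M i)})
    (x y : Fin n) (hxy : A x y) :
    lam / (2 * n * (lam + 1))
      ≤ (Nat.card {M : Equiv.Perm (Fin n) // (∀ i, A i (M i)) ∧ M x = y} : ℝ) /
          Nat.card {M : Equiv.Perm (Fin n) // ∀ i, A i (M i)} := by
  classical
  have hn : 0 < n := x.pos
  -- finset versions of the counted sets
  set MS : Finset (Equiv.Perm (Fin n)) := univ.filter (fun M => ∀ i, A i (M i)) with hMS
  set AS : Finset (Equiv.Perm (Fin n)) := MS.filter (fun M => M x = y) with hAS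
  set BS : Finset (Equiv.Perm (Fin n)) := MS.filter (fun M => ¬ M x = y) with hBS
  have hMScard : (Nat.card {M : Equiv.Perm (Fin n) // ∀ i, A i (M i)}) = MS.card := by
    rw [Nat.card_eq_fintype_card, hMS, Fintype.card_subtype]
  have hAScard : (Nat.card {M : Equiv.Perm (Fin n) // (∀ i, A i (M i)) ∧ M x = y}) = AS.card := by
    rw [Nat.card_eq_fintype_card, hAS, hMS, Fintype.card_subtype, filter_filter]
  have hsplit : AS.card + BS.card = MS.card := by
    rw [hAS, hBS]; exact card_filter_add_card_filter_not _
  have hMSpos : 0 < MS.card := by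
    obtain ⟨⟨M, hM⟩⟩ := hPM
    exact card_pos.mpr ⟨M, by simp [hMS, hM]⟩
  -- degree bound
  set D : ℕ := ⌊(1/2 + lam) * n⌋₊ + 1 with hD
  have hDreal : ((1/2 + lam) * n : ℝ) < D := by
    rw [hD]; push_cast; exact Nat.lt_floor_add_one _
  have hdeg : ∀ v : ℝ, ∀ c : ℕ, v = ((1/2+lam) * n : ℝ) → (v < (c:ℝ)) → D ≤ c := by
    intro v c hv hc
    have h0 : (0:ℝ) ≤ v := by rw [hv]; positivity
    have : ((⌊(1/2+lam) * n⌋₊ : ℝ)) < (c : ℝ) := lt_of_le_of_lt (hv ▸ Nat.floor_le h0) hc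
    have := Nat.cast_lt.mp this
    omega
  have hrowD : ∀ u : Fin n, D ≤ (univ.filter (fun w => A u w)).card := by
    intro u
    refine hdeg _ _ rfl ?_
    have h := hrow u
    rwa [Nat.card_eq_fintype_card, Fintype.card_subtype] at h
  have hcolD : ∀ w : Fin n, D ≤ (univ.filter (fun u => A u w)).card := by
    intro w
    refine hdeg _ _ rfl ?_
    have h := hcol w
    rwa [Nat.card_eq_fintype_card, Fintype.card_subtype] at h
  have hDn : n + 1 ≤ 2 * D := by
    have h2 : (n : ℝ) < 2 * (D : ℝ) := by
      nlinarith [hDreal, mul_nonneg hlam.le (Nat.cast_nonneg (α := ℝ) n)]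
    have h3 : n < 2 * D := by exact_mod_cast h2
    omega
  set k2 : ℕ := 2 * D - (n + 1) with hk2
  set K : ℕ := max k2 1 with hK
  -- the switching relation
  set r : Equiv.Perm (Fin n) → Equiv.Perm (Fin n) → Prop :=
    fun M M' => ∃ z, z ≠ x ∧
      M' = M * (Equiv.swap x (M.symm y) * Equiv.swap (M.symm y) z) with hr
  -- out-degree lower bound
  have hout : ∀ M ∈ BS, K ≤ (AS.bipartiteAbove r M).card := by
    intro M hM
    rw [hBS, mem_filter, hMS, mem_filter] at hM
    obtain ⟨⟨-, hMP⟩, hMxy⟩ := hM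
    set p := M.symm y with hp
    have hMp : M p = y := M.apply_symm_apply y
    have hpx : p ≠ x := fun h => hMxy (by rw [← h, hMp])
    set S : Finset (Fin n) := univ.filter (fun z => A p (M z)) with hSdef
    set T : Finset (Fin n) := univ.filter (fun z => A z (M x)) with hTdef
    have hScard : D ≤ S.card := by
      have hSeq : S = (univ.filter (fun w => A p w)).map M.symm.toEmbedding := by
        ext z
        simp only [hSdef, mem_filter, mem_univ, true_and, mem_map, Equiv.coe_toEmbedding]
        constructor
        · intro h; exact ⟨M z, h, M.symm_apply_apply z⟩
        · rintro ⟨w, hw, rfl⟩; rwa [M.apply_symm_apply]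
      rw [hSeq, card_map]; exact hrowD p
    have hTcard : D ≤ T.card := hcolD (M x)
    have hIU : (S ∩ T).card + (S ∪ T).card = S.card + T.card := card_inter_add_card_union S T
    have hU : (S ∪ T).card ≤ n := by
      have h := card_le_card (subset_univ (S ∪ T))
      simpa using h
    set Z : Finset (Fin n) := (S ∩ T).erase x with hZdef
    have hZk2 : k2 ≤ Z.card := by
      have h1 : (S ∩ T).card - 1 ≤ Z.card := pred_card_le_card_erase
      omega
    have hZ1 : 1 ≤ Z.card := by
      rcases em (x ∈ S ∩ T) with hx | hx
      · have hxS : A p (M x) := by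
          have h := (mem_inter.mp hx).1
          simpa [hSdef] using h
        have hpZ : p ∈ Z := by
          refine mem_erase.mpr ⟨hpx, mem_inter.mpr ⟨?_, ?_⟩⟩
          · simp [hSdef, hMP p]
          · simp [hTdef, hxS]
        exact card_pos.mpr ⟨p, hpZ⟩
      · have hZe : Z = S ∩ T := by rw [hZdef, erase_eq_of_notMem hx]
        rw [hZe]
        omega
    have hmem : ∀ z ∈ Z,
        M * (Equiv.swap x p * Equiv.swap p z) ∈ AS.bipartiteAbove r M := by
      intro z hz
      obtain ⟨hzx, hzST⟩ := mem_erase.mp hz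
      obtain ⟨hzS, hzT⟩ := mem_inter.mp hzST
      have hzS' : A p (M z) := by simpa [hSdef] using hzS
      have hzT' : A z (M x) := by simpa [hTdef] using hzT
      have hsx : (Equiv.swap x p * Equiv.swap p z) x = p := by
        simp only [Equiv.Perm.mul_apply]
        rw [Equiv.swap_apply_of_ne_of_ne hpx.symm (Ne.symm hzx), Equiv.swap_apply_left]
      have hax : (M * (Equiv.swap x p * Equiv.swap p z)) x = y := by
        rw [Equiv.Perm.mul_apply, hsx, hMp]
      have hP' : ∀ i, A i ((M * (Equiv.swap x p * Equiv.swap p z)) i) := by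
        intro i
        rw [Equiv.Perm.mul_apply]
        by_cases hix : i = x
        · subst hix; rw [hsx, hMp]; exact hxy
        by_cases hip : i = p
        · subst hip
          by_cases hzp : z = p
          · have hsp : (Equiv.swap x p * Equiv.swap p z) p = x := by
              subst hzp
              simp only [Equiv.Perm.mul_apply, Equiv.swap_self, Equiv.refl_apply,
                Equiv.swap_apply_right]
            rw [hsp]; exact hzp ▸ hzT'
          · have hsp : (Equiv.swap x p * Equiv.swap p z) p = z := by
              simp only [Equiv.Perm.mul_apply, Equiv.swap_apply_left]
              exact Equiv.swap_apply_of_ne_of_ne hzx hzp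
            rw [hsp]; exact hzS'
        by_cases hiz : i = z
        · subst hiz
          have hsz : (Equiv.swap x p * Equiv.swap p i) i = x := by
            simp only [Equiv.Perm.mul_apply, Equiv.swap_apply_right]
          rw [hsz]; exact hzT'
        · have hsi : (Equiv.swap x p * Equiv.swap p z) i = i := by
            simp only [Equiv.Perm.mul_apply]
            rw [Equiv.swap_apply_of_ne_of_ne hip hiz, Equiv.swap_apply_of_ne_of_ne hix hip]
          rw [hsi]; exact hMP i
      refine (mem_bipartiteAbove r).mpr ⟨?_, ?_⟩
      · rw [hAS, mem_filter, hMS, mem_filter]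
        exact ⟨⟨mem_univ _, hP'⟩, hax⟩
      · rw [hr]
        exact ⟨z, hzx, by rw [← hp]⟩
    have hginj : Set.InjOn (fun z => M * (Equiv.swap x p * Equiv.swap p z)) Z := by
      intro z1 h1 z2 h2 he
      simp only at he
      have h3 : Equiv.swap x p * Equiv.swap p z1 = Equiv.swap x p * Equiv.swap p z2 :=
        mul_left_cancel he
      have h4 : Equiv.swap p z1 = Equiv.swap p z2 := mul_left_cancel h3
      have h5 : Equiv.swap p z2 z1 = p := by
        rw [← h4]; exact Equiv.swap_apply_right _ z1
      have h6 := congrArg (Equiv.swap p z2) h5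
      rwa [Equiv.swap_apply_self, Equiv.swap_apply_left] at h6
    have hZle : Z.card ≤ (AS.bipartiteAbove r M).card :=
      card_le_card_of_injOn _ hmem hginj
    have hKZ : K ≤ Z.card := max_le hZk2 hZ1
    omega
  -- fiber upper bound
  have hfib : ∀ M' ∈ AS, (BS.bipartiteBelow r M').card ≤ n * n := by
    intro M' _
    have h1 : (BS.bipartiteBelow r M').card ≤ (univ ×ˢ univ : Finset (Fin n × Fin n)).card := by
      apply card_le_card_of_injOn (fun M => (M.symm y, if h : r M M' then h.choose else x))
      · intro M _
        simp [mem_product]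
      · intro M1 hM1 M2 hM2 he
        have hr1 : r M1 M' := ((mem_bipartiteBelow r).mp (mem_coe.mp hM1)).2
        have hr2 : r M2 M' := ((mem_bipartiteBelow r).mp (mem_coe.mp hM2)).2
        simp only [dif_pos hr1, dif_pos hr2] at he
        have h5 : M1.symm y = M2.symm y := congrArg Prod.fst he
        have h6 : hr1.choose = hr2.choose := congrArg Prod.snd he
        obtain ⟨hz1x, hM1e⟩ := hr1.choose_spec
        obtain ⟨hz2x, hM2e⟩ := hr2.choose_spec
        have h7 : M1 * (Equiv.swap x (M1.symm y) * Equiv.swap (M1.symm y) hr1.choose)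
            = M2 * (Equiv.swap x (M2.symm y) * Equiv.swap (M2.symm y) hr2.choose) := by
          rw [← hM1e, ← hM2e]
        rw [h6, h5] at h7
        exact mul_right_cancel h7
    simpa using h1
  have hcount : BS.card * K ≤ AS.card * (n * n) :=
    card_mul_le_card_mul r hout hfib
  have hK1 : 1 ≤ K := le_max_right _ _
  have hASpos : 0 < AS.card := by
    rcases Nat.eq_zero_or_pos AS.card with h | h
    · rw [h, zero_mul] at hcount
      have hB0 : BS.card = 0 := by
        rcases Nat.mul_eq_zero.mp (Nat.le_zero.mp hcount) with h' | h'
        · exact h'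
        · omega
      omega
    · exact h
  have hKreal : 2 * lam * n - 1 < (K : ℝ) := by
    have h1 : k2 ≤ K := le_max_left _ _
    have h2 : (k2 : ℝ) = 2 * (D : ℝ) - ((n : ℝ) + 1) := by
      rw [hk2, Nat.cast_sub hDn]
      push_cast; ring
    have h3 : (k2 : ℝ) ≤ (K : ℝ) := Nat.cast_le.mpr h1
    nlinarith [hDreal]
  -- final arithmetic
  rw [hAScard, hMScard]
  have hbM : (MS.card : ℝ) = (AS.card : ℝ) + (BS.card : ℝ) := by exact_mod_cast hsplit.symm
  have hnR : (1 : ℝ) ≤ (n : ℝ) := by exact_mod_cast hn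
  have haR : (1 : ℝ) ≤ (AS.card : ℝ) := by exact_mod_cast hASpos
  have hBR : (0 : ℝ) ≤ (BS.card : ℝ) := Nat.cast_nonneg _
  have hKR : (1 : ℝ) ≤ (K : ℝ) := by exact_mod_cast hK1
  have hBK : (BS.card : ℝ) * (K : ℝ) ≤ (AS.card : ℝ) * ((n : ℝ) * (n : ℝ)) := by
    exact_mod_cast hcount
  have hkey : lam * (BS.card : ℝ) ≤ (AS.card : ℝ) * (n : ℝ) := by
    rcases le_or_gt (lam * (n : ℝ)) 1 with hc | hc
    · nlinarith [mul_le_mul_of_nonneg_left hBK hlam.le,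
        mul_nonneg (mul_nonneg hlam.le hBR) (sub_nonneg.mpr hKR),
        mul_le_mul_of_nonneg_left hc
          (mul_nonneg (le_trans zero_le_one haR) (le_trans zero_le_one hnR))]
    · have hKlamn : lam * (n : ℝ) ≤ (K : ℝ) := by nlinarith
      nlinarith [mul_le_mul_of_nonneg_left hBK hlam.le,
        mul_nonneg (mul_nonneg hlam.le hBR) (sub_nonneg.mpr hKlamn)]
  have hden : (0 : ℝ) < 2 * (n : ℝ) * (lam + 1) := by nlinarith
  have hMSR : (0 : ℝ) < (MS.card : ℝ) := by exact_mod_cast hMSpos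
  rw [div_le_div_iff₀ hden hMSR]
  rw [hbM]
  have ha0 : (0 : ℝ) ≤ (AS.card : ℝ) := le_trans zero_le_one haR
  have hfac : (0 : ℝ) ≤ 2 * (n : ℝ) * lam + (n : ℝ) - lam := by
    nlinarith [mul_nonneg hlam.le (le_trans zero_le_one hnR)]
  nlinarith [hkey, mul_nonneg ha0 hfac]
end

section
/- Let G(X,Y) be a bipartite graph with a perfect matching M. Form the directed graph D by orienting every edge of G from Y to X and adding, for each matching edge (x, y) ∈ M, a directed edge from x to y. Then an edge e of G lies in some perfect matching of G if and only if its two endpoints lie in the same strongly connected component of D. -/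
/-! An edge `(x, M' x)` of a perfect matching `M'` closes a directed cycle of `D`: following
`M`-edges forwards and `M'`-edges backwards from `x` walks along the cycle of `M'⁻¹ ∘ M`
through `x`, whose last vertex is matched by `M` to `M' x`. Conversely, a `D`-path from `x` to
`y` projects to a path `x = a₀, a₁, …, aₖ = M⁻¹ y` in `X` with `aᵢ₊₁` adjacent to `M aᵢ`;
shifting `M` along a simple such path and matching `x` with `y` gives a perfect matching
containing `(x, y)`. -/

open Relation

theorem Equiv.Perm.reflTransGen_inv_apply {α : Type*} [Finite α] {r : α → α → Prop}
    {f : Equiv.Perm α} (hf : ∀ a, r a (f a)) (a : α) : ReflTransGen r a (f⁻¹ a) := by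
  obtain ⟨k, hk⟩ := (show f.SameCycle a (f⁻¹ a) from ⟨-1, by simp⟩).exists_nat_pow_eq
  rw [← hk]
  clear hk
  induction k with
  | zero => exact .refl
  | succ k ih => simpa only [pow_succ', Equiv.Perm.mul_apply] using ih.tail (hf _)

section Matching

variable {X Y : Type*} {A : X → Y → Prop} {M : X ≃ Y}

/-- `u → v` iff `inl u → inr (M u) → inl v` is a path of the digraph. -/
def AlternatingStep (A : X → Y → Prop) (M : X ≃ Y) (u v : X) : Prop :=
  A v (M u)

theorem exists_equiv_of_reflTransGen_alternatingStep [DecidableEq X] (hM : ∀ i, A i (M i))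
    {a b : X} (h : ReflTransGen (AlternatingStep A M) a b) :
    ∃ N : X ≃ Y, N a = M b ∧ ∀ i ≠ a, A i (N i) := by
  /- `T` collects the vertices of the path; shifting `M` along the part of the path that
  starts at any `c ∈ T` changes `M` only on `T`. -/
  suffices ∃ T : Finset X, a ∈ T ∧ ∀ c ∈ T, ∃ N : X ≃ Y,
      N c = M b ∧ (∀ i ≠ c, A i (N i)) ∧ ∀ i ∉ T, N i = M i by
    obtain ⟨T, haT, hT⟩ := this
    obtain ⟨N, hNa, hN, -⟩ := hT a haT
    exact ⟨N, hNa, hN⟩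
  induction h using ReflTransGen.head_induction_on with
  | refl =>
    refine ⟨{b}, Finset.mem_singleton_self b, fun c hc => ?_⟩
    rw [Finset.mem_singleton.mp hc]
    exact ⟨M, rfl, fun i _ => hM i, fun i _ => rfl⟩
  | @head a c hac _ ih =>
    obtain ⟨T, hcT, hT⟩ := ih
    by_cases haT : a ∈ T
    · exact ⟨T, haT, hT⟩
    refine ⟨insert a T, Finset.mem_insert_self a T, fun d hd => ?_⟩
    rcases Finset.mem_insert.mp hd with rfl | hdT
    · obtain ⟨N, hNc, hN, hNT⟩ := hT c hcT
      refine ⟨(Equiv.swap d c).trans N, by simpa using hNc, fun i hi => ?_, fun i hi => ?_⟩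
      · by_cases hic : i = c
        · subst hic
          simpa [AlternatingStep, hNT d haT] using hac
        · simpa [Equiv.swap_apply_of_ne_of_ne hi hic] using hN i hic
      · have hiT : i ∉ T := fun h => hi (Finset.mem_insert_of_mem h)
        have hic : i ≠ c := fun h => hiT (h ▸ hcT)
        have hid : i ≠ d := fun h => hi (h ▸ Finset.mem_insert_self d T)
        simpa [Equiv.swap_apply_of_ne_of_ne hid hic] using hNT i hiT
    · obtain ⟨N, hNd, hN, hNT⟩ := hT d hdT
      exact ⟨N, hNd, hN, fun i hi => hNT i fun h => hi (Finset.mem_insert_of_mem h)⟩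

theorem reflTransGen_alternatingStep_of_reflTransGen {D : X ⊕ Y → X ⊕ Y → Prop}
    (hD : ∀ u v, D u v →
      (∃ i j, A i j ∧ u = .inr j ∧ v = .inl i) ∨ ∃ i, u = .inl i ∧ v = .inr (M i))
    {u v : X ⊕ Y} (h : ReflTransGen D u v) :
    ReflTransGen (AlternatingStep A M) (Sum.elim id M.symm u) (Sum.elim id M.symm v) := by
  refine ReflTransGen.lift' _ (fun p q hpq => ?_) u v h
  rcases hD p q hpq with ⟨i, j, hij, rfl, rfl⟩ | ⟨i, rfl, rfl⟩
  · exact .single (by simpa [AlternatingStep] using hij)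
  · simpa [Function.onFun] using ReflTransGen.refl

theorem reflTransGen_inl_inr_of_matching [Finite X] {D : X ⊕ Y → X ⊕ Y → Prop}
    (hMD : ∀ i, D (.inl i) (.inr (M i))) (hAD : ∀ i j, A i j → D (.inr j) (.inl i))
    {M' : X ≃ Y} (hM' : ∀ i, A i (M' i)) (x : X) : ReflTransGen D (.inl x) (.inr (M' x)) := by
  let f : Equiv.Perm X := M.trans M'.symm
  have hf : ∀ i, ReflTransGen D (.inl i) (.inl (f i)) := fun i =>
    (ReflTransGen.single (hMD i)).tail (hAD _ _ (by simpa [f] using hM' (f i)))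
  have hx : ReflTransGen D (.inl x) (.inl (f⁻¹ x)) :=
    ReflTransGen.lift' Sum.inl (r := fun i j => f i = j) (by rintro i _ rfl; exact hf i)
      x _ (f.reflTransGen_inv_apply (fun _ => rfl) x)
  simpa [f] using hx.tail (hMD _)

end Matching

/-- Dulmage–Mendelsohn type characterization of extendable edges: fix a perfect matching
`M` of a bipartite graph `G(X,Y)` and orient every edge of `G` from `Y` to `X`, adding for
each matching edge `(x, M x)` an arc from `x` to `M x`.  Then an edge `(x, y)` of `G` lies
in some perfect matching iff `x` (in `X`) and `y` (in `Y`) lie in the same strongly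
connected component of the resulting digraph. -/
theorem extendable_iff_same_scc
    (n : ℕ) (A : Fin n → Fin n → Prop)
    (M : Equiv.Perm (Fin n)) (hM : ∀ i, A i (M i))
    (D : (Fin n ⊕ Fin n) → (Fin n ⊕ Fin n) → Prop)
    (hD : ∀ u v, D u v ↔
      ((∃ x y, A x y ∧ u = Sum.inr y ∧ v = Sum.inl x) ∨
        (∃ x, u = Sum.inl x ∧ v = Sum.inr (M x))))
    (x y : Fin n) (hxy : A x y) :
    (∃ M' : Equiv.Perm (Fin n), (∀ i, A i (M' i)) ∧ M' x = y) ↔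
      (Relation.ReflTransGen D (Sum.inl x) (Sum.inr y) ∧
        Relation.ReflTransGen D (Sum.inr y) (Sum.inl x)) := by
  constructor
  · rintro ⟨M', hM', rfl⟩
    refine ⟨reflTransGen_inl_inr_of_matching (M := M) (fun i => ?_) (fun i j hij => ?_) hM' x,
      .single ((hD _ _).mpr (.inl ⟨x, M' x, hxy, rfl, rfl⟩))⟩
    · exact (hD _ _).mpr (.inr ⟨i, rfl, rfl⟩)
    · exact (hD _ _).mpr (.inl ⟨i, j, hij, rfl, rfl⟩)
  · rintro ⟨hreach, -⟩
    have hpath : ReflTransGen (AlternatingStep A M) x (M.symm y) :=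
      reflTransGen_alternatingStep_of_reflTransGen (fun u v => (hD u v).mp) hreach
    obtain ⟨N, hNx, hN⟩ := exists_equiv_of_reflTransGen_alternatingStep hM hpath
    rw [Equiv.apply_symm_apply] at hNx
    refine ⟨N, fun i => ?_, hNx⟩
    by_cases hix : i = x
    · rwa [hix, hNx]
    · exact hN i hix
end

section
/- Let χ be a finite set, ν the uniform distribution on χ, and μ a fully supported distribution on χ, with ρ(x) = ν(x)/μ(x). Let L = D_KL(ν||μ). For i.i.d. samples X_1, …, X_N from μ and the estimator I_N = (1/N) Σ 1/μ(X_i) of |χ|: if t ≥ 0, N = ⌈exp(L + t)⌉, and ε² = (L+2)/(L+t), then E[|I_N − |χ|| / |χ|] ≤ e^{−t/4} + 2ε. -/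
/-!
With `ρ = ν / μ`, the relative error `I_N / |χ| - 1` is the deviation of the sample mean of `ρ`
under `μ` from `E_μ ρ = 1`. Truncate `ρ` at `A = exp (L + t / 2)`: the truncated part has second
moment at most `A`, so by Cauchy–Schwarz its sample mean deviates on average by at most
`√(A / N) ≤ exp (-t / 4)`; the discarded part costs at most twice the tail mass
`p = ν (ρ > A)`. Markov's inequality for `log ρ` under `ν`, whose positive part has mean at most
`L + 1`, gives `p ≤ (L + 1) / (L + t / 2)`, and this is at most `ε`.
-/

open Finset Real InformationTheory

namespace ImportanceSampling

variable {χ : Type*}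

noncomputable def sampleMean {N : ℕ} (F : χ → ℝ) (X : Fin N → χ) : ℝ :=
  (∑ i, F (X i)) / N

theorem abs_mean_inv_sub_div_eq {N : ℕ} (μ : χ → ℝ) {c : ℝ} (hc : 0 < c) (X : Fin N → χ) :
    |(1 / N : ℝ) * (∑ i, 1 / μ (X i)) - c| / c = |sampleMean (fun x => 1 / c / μ x) X - 1| := by
  have hinv : ∑ i, 1 / μ (X i) = c * ∑ i, 1 / c / μ (X i) := by
    rw [mul_sum]
    exact sum_congr rfl fun i _ => by field_simp
  rw [sampleMean, hinv, show (1 / N : ℝ) * (c * ∑ i, 1 / c / μ (X i)) - c =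
    c * ((∑ i, 1 / c / μ (X i)) / N - 1) by ring, abs_mul, abs_of_pos hc,
    mul_div_cancel_left₀ _ hc.ne']

variable [Fintype χ]

def iidExpect (μ : χ → ℝ) (N : ℕ) (Φ : (Fin N → χ) → ℝ) : ℝ :=
  ∑ X : Fin N → χ, (∏ i, μ (X i)) * Φ X

section iidExpect

variable {μ : χ → ℝ} {N : ℕ}

theorem iidExpect_add (Φ Ψ : (Fin N → χ) → ℝ) :
    iidExpect μ N (fun X => Φ X + Ψ X) = iidExpect μ N Φ + iidExpect μ N Ψ := by
  simp only [iidExpect, mul_add, sum_add_distrib]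

theorem iidExpect_sum {ι : Type*} (s : Finset ι) (Φ : ι → (Fin N → χ) → ℝ) :
    iidExpect μ N (fun X => ∑ a ∈ s, Φ a X) = ∑ a ∈ s, iidExpect μ N (Φ a) := by
  simp only [iidExpect, mul_sum]
  exact sum_comm

theorem iidExpect_div_const (Φ : (Fin N → χ) → ℝ) (c : ℝ) :
    iidExpect μ N (fun X => Φ X / c) = iidExpect μ N Φ / c := by
  simp only [iidExpect, mul_div_assoc', sum_div]

theorem iidExpect_mono (hμ0 : ∀ x, 0 ≤ μ x) {Φ Ψ : (Fin N → χ) → ℝ} (h : ∀ X, Φ X ≤ Ψ X) :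
    iidExpect μ N Φ ≤ iidExpect μ N Ψ :=
  sum_le_sum fun X _ => mul_le_mul_of_nonneg_left (h X) (prod_nonneg fun i _ => hμ0 (X i))

theorem iidExpect_prod (f : Fin N → χ → ℝ) :
    iidExpect μ N (fun X => ∏ i, f i (X i)) = ∏ i, ∑ x, μ x * f i x := by
  simp only [iidExpect, ← prod_mul_distrib]
  exact (Fintype.prod_sum fun i x => μ x * f i x).symm

theorem iidExpect_const (hμ : ∑ x, μ x = 1) (c : ℝ) : iidExpect μ N (fun _ => c) = c := by
  have hmass := iidExpect_prod (μ := μ) fun (_ : Fin N) (_ : χ) => (1 : ℝ)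
  simp only [iidExpect, prod_const_one, mul_one, hμ] at hmass
  rw [iidExpect, ← sum_mul, hmass, one_mul]

theorem iidExpect_apply (hμ : ∑ x, μ x = 1) (F : χ → ℝ) (j : Fin N) :
    iidExpect μ N (fun X => F (X j)) = ∑ x, μ x * F x := by
  simpa [ite_apply, hμ] using iidExpect_prod (μ := μ) fun i => if i = j then F else 1

theorem iidExpect_apply_mul_apply (hμ : ∑ x, μ x = 1) (F G : χ → ℝ) {j k : Fin N} (hjk : j ≠ k) :
    iidExpect μ N (fun X => F (X j) * G (X k)) = (∑ x, μ x * F x) * ∑ x, μ x * G x := by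
  have hfactor : ∀ i, ∑ x, μ x * ((if i = j then F else 1) x * (if i = k then G else 1) x) =
      (if i = j then ∑ x, μ x * F x else 1) * (if i = k then ∑ x, μ x * G x else 1) := by
    intro i
    by_cases hij : i = j
    · simp [hij, hjk]
    · by_cases hik : i = k <;> simp [hij, hik, hμ, hjk.symm]
  have := iidExpect_prod (μ := μ) fun i => (if i = j then F else 1) * (if i = k then G else 1)
  simp only [Pi.mul_apply, hfactor, prod_mul_distrib] at this
  simpa [ite_apply] using this

theorem iidExpect_sum_sq (hμ : ∑ x, μ x = 1) {d : χ → ℝ} (hd : ∑ x, μ x * d x = 0) :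
    iidExpect μ N (fun X => (∑ i, d (X i)) ^ 2) = N * ∑ x, μ x * d x ^ 2 := by
  have hpair : ∀ i j : Fin N, iidExpect μ N (fun X => d (X i) * d (X j)) =
      if i = j then ∑ x, μ x * d x ^ 2 else 0 := by
    intro i j
    split_ifs with hij
    · subst hij
      simpa only [sq] using iidExpect_apply hμ (fun x => d x * d x) i
    · rw [iidExpect_apply_mul_apply hμ d d hij, hd, zero_mul]
  simp only [sq, sum_mul_sum]
  simp only [iidExpect_sum, ← sq, hpair]
  simp

theorem iidExpect_sampleMean (hμ : ∑ x, μ x = 1) (hN : N ≠ 0) (F : χ → ℝ) :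
    iidExpect μ N (sampleMean F) = ∑ x, μ x * F x := by
  have hN' : (N : ℝ) ≠ 0 := Nat.cast_ne_zero.2 hN
  change iidExpect μ N (fun X => (∑ i, F (X i)) / N) = _
  simp only [iidExpect_div_const, iidExpect_sum, iidExpect_apply hμ, sum_const,
    card_univ, Fintype.card_fin, nsmul_eq_mul]
  field_simp

theorem iidExpect_sampleMean_sub_sq (hμ : ∑ x, μ x = 1) (hN : N ≠ 0) (g : χ → ℝ) :
    iidExpect μ N (fun X => (sampleMean g X - ∑ x, μ x * g x) ^ 2) =
      (∑ x, μ x * g x ^ 2 - (∑ x, μ x * g x) ^ 2) / N := by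
  set m := ∑ x, μ x * g x
  have hcenter : ∑ x, μ x * (g x - m) = 0 := by
    simp only [mul_sub, sum_sub_distrib, ← sum_mul, hμ, one_mul, m, sub_self]
  have hvar : ∑ x, μ x * (g x - m) ^ 2 = ∑ x, μ x * g x ^ 2 - m ^ 2 := by
    have : ∀ x, μ x * (g x - m) ^ 2 = μ x * g x ^ 2 - 2 * m * (μ x * g x) + m ^ 2 * μ x :=
      fun x => by ring
    simp only [this, sum_add_distrib, sum_sub_distrib, ← mul_sum, hμ, m]
    ring
  have hmean : ∀ X : Fin N → χ, sampleMean g X - m = (∑ i, (g (X i) - m)) / N := by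
    intro X
    simp only [sampleMean, sum_sub_distrib, sum_const, card_univ, Fintype.card_fin, nsmul_eq_mul]
    field_simp
  simp only [hmean, div_pow, iidExpect_div_const, iidExpect_sum_sq hμ hcenter, hvar]
  field_simp

theorem iidExpect_abs_le_sqrt (hμ0 : ∀ x, 0 ≤ μ x) (hμ : ∑ x, μ x = 1) (Φ : (Fin N → χ) → ℝ) :
    iidExpect μ N (fun X => |Φ X|) ≤ √(iidExpect μ N (fun X => Φ X ^ 2)) := by
  have hweight : ∑ X : Fin N → χ, ∏ i, μ (X i) = 1 := by
    simpa [iidExpect] using iidExpect_const (N := N) hμ 1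
  have hjensen := (convexOn_pow 2).map_sum_le (t := univ) (w := fun X : Fin N → χ => ∏ i, μ (X i))
    (p := fun X => |Φ X|) (fun X _ => prod_nonneg fun i _ => hμ0 (X i)) hweight
    (fun X _ => abs_nonneg (Φ X))
  simp only [smul_eq_mul, sq_abs] at hjensen
  exact Real.le_sqrt_of_sq_le hjensen

theorem iidExpect_abs_sampleMean_sub_le (hμ0 : ∀ x, 0 ≤ μ x) (hμ : ∑ x, μ x = 1) (hN : N ≠ 0)
    (g : χ → ℝ) :
    iidExpect μ N (fun X => |sampleMean g X - ∑ x, μ x * g x|) ≤ √((∑ x, μ x * g x ^ 2) / N) := by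
  refine (iidExpect_abs_le_sqrt hμ0 hμ _).trans (Real.sqrt_le_sqrt ?_)
  rw [iidExpect_sampleMean_sub_sq hμ hN]
  gcongr
  exact sub_le_self _ (sq_nonneg _)

theorem sum_mul_sq_truncate_le (hμ0 : ∀ x, 0 ≤ μ x) {ρ : χ → ℝ} (hρ0 : ∀ x, 0 ≤ ρ x) {A : ℝ}
    (hA : 0 ≤ A) : ∑ x, μ x * (if A < ρ x then 0 else ρ x) ^ 2 ≤ A * ∑ x, μ x * ρ x := by
  rw [mul_sum]
  refine sum_le_sum fun x _ => ?_
  split_ifs with hx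
  · simp [mul_nonneg hA (mul_nonneg (hμ0 x) (hρ0 x))]
  · nlinarith [mul_le_mul_of_nonneg_left (not_lt.1 hx) (mul_nonneg (hμ0 x) (hρ0 x))]

theorem iidExpect_abs_sampleMean_sub_one_le (hμ0 : ∀ x, 0 ≤ μ x) (hμ : ∑ x, μ x = 1)
    {ρ : χ → ℝ} (hρ0 : ∀ x, 0 ≤ ρ x) (hρ : ∑ x, μ x * ρ x = 1) {A : ℝ} (hA : 0 ≤ A)
    (hN : N ≠ 0) :
    iidExpect μ N (fun X => |sampleMean ρ X - 1|) ≤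
      √(A / N) + 2 * ∑ x with A < ρ x, μ x * ρ x := by
  set g : χ → ℝ := fun x => if A < ρ x then 0 else ρ x
  set h : χ → ℝ := fun x => if A < ρ x then ρ x else 0
  set p := ∑ x with A < ρ x, μ x * ρ x
  have hp : ∑ x, μ x * h x = p := by simp only [h, p, sum_filter, mul_ite, mul_zero]
  have hm : ∑ x, μ x * g x = 1 - p := by
    rw [← hρ, ← hp, ← sum_sub_distrib]
    refine sum_congr rfl fun x _ => ?_
    simp only [g, h]
    split_ifs <;> ring
  have hp0 : 0 ≤ p := sum_nonneg fun x _ => mul_nonneg (hμ0 x) (hρ0 x)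
  have hg2 : ∑ x, μ x * g x ^ 2 ≤ A := by
    simpa only [hρ, mul_one] using sum_mul_sq_truncate_le hμ0 hρ0 hA
  have hsplit : ∀ X : Fin N → χ,
      |sampleMean ρ X - 1| ≤ |sampleMean g X - (1 - p)| + (sampleMean h X + p) := by
    intro X
    have hρgh : sampleMean ρ X = sampleMean g X + sampleMean h X := by
      simp only [sampleMean, ← add_div, ← sum_add_distrib, g, h]
      congr 1
      refine sum_congr rfl fun i _ => ?_
      split_ifs <;> ring
    have hh0 : 0 ≤ sampleMean h X :=
      div_nonneg (sum_nonneg fun i _ => by simp only [h]; split_ifs <;> simp [hρ0]) (Nat.cast_nonneg _)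
    rw [hρgh]
    exact abs_le.2 ⟨by linarith [neg_abs_le (sampleMean g X - (1 - p))],
      by linarith [le_abs_self (sampleMean g X - (1 - p))]⟩
  calc iidExpect μ N (fun X => |sampleMean ρ X - 1|)
      ≤ iidExpect μ N (fun X => |sampleMean g X - (1 - p)| + (sampleMean h X + p)) :=
        iidExpect_mono hμ0 hsplit
    _ = iidExpect μ N (fun X => |sampleMean g X - (1 - p)|) + (p + p) := by
        rw [iidExpect_add, iidExpect_add, iidExpect_const hμ, iidExpect_sampleMean hμ hN, hp]
    _ ≤ √(A / N) + 2 * p := by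
        have hmean := iidExpect_abs_sampleMean_sub_le hμ0 hμ hN g
        rw [hm] at hmean
        have : √((∑ x, μ x * g x ^ 2) / N) ≤ √(A / N) := by gcongr
        linarith

end iidExpect

theorem mul_klFun_div {a b : ℝ} (hb : b ≠ 0) : b * klFun (a / b) = a * log (a / b) + b - a := by
  rw [klFun_apply]
  field_simp

noncomputable def relEntropy (ν μ : χ → ℝ) : ℝ :=
  ∑ x, ν x * log (ν x / μ x)

section relEntropy

variable {μ ν : χ → ℝ}

theorem relEntropy_eq_sum_mul_klFun (hμ0 : ∀ x, 0 < μ x) (hμ : ∑ x, μ x = 1)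
    (hν : ∑ x, ν x = 1) : relEntropy ν μ = ∑ x, μ x * klFun (ν x / μ x) := by
  simp only [relEntropy, mul_klFun_div (hμ0 _).ne', sum_sub_distrib, sum_add_distrib, hμ, hν]
  ring

theorem relEntropy_nonneg (hμ0 : ∀ x, 0 < μ x) (hν0 : ∀ x, 0 ≤ ν x) (hμ : ∑ x, μ x = 1)
    (hν : ∑ x, ν x = 1) : 0 ≤ relEntropy ν μ := by
  rw [relEntropy_eq_sum_mul_klFun hμ0 hμ hν]
  exact sum_nonneg fun x _ =>
    mul_nonneg (hμ0 x).le (klFun_nonneg (div_nonneg (hν0 x) (hμ0 x).le))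

theorem eq_of_relEntropy_eq_zero (hμ0 : ∀ x, 0 < μ x) (hν0 : ∀ x, 0 ≤ ν x)
    (hμ : ∑ x, μ x = 1) (hν : ∑ x, ν x = 1) (h : relEntropy ν μ = 0) : ν = μ := by
  have hν0μ : ∀ x, 0 ≤ ν x / μ x := fun x => div_nonneg (hν0 x) (hμ0 x).le
  rw [relEntropy_eq_sum_mul_klFun hμ0 hμ hν, sum_eq_zero_iff_of_nonneg fun x _ =>
    mul_nonneg (hμ0 x).le (klFun_nonneg (hν0μ x))] at h
  funext x
  have hx := (mul_eq_zero.1 (h x (mem_univ x))).resolve_left (hμ0 x).ne'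
  exact (div_eq_one_iff_eq (hμ0 x).ne').1 ((klFun_eq_zero_iff (hν0μ x)).1 hx)

/-- Markov's inequality for `log (ν / μ)` under `ν`; the `+ 1` bounds the `ν`-mean of the
negative part of the logarithm by `∑ μ`. -/
theorem mul_sum_exp_lt_div_le (hμ0 : ∀ x, 0 < μ x) (hν0 : ∀ x, 0 ≤ ν x) (hμ : ∑ x, μ x = 1)
    (s : ℝ) : s * ∑ x with exp s < ν x / μ x, ν x ≤ relEntropy ν μ + 1 := by
  have hterm : ∀ x, (if exp s < ν x / μ x then s * ν x else 0) ≤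
      ν x * log (ν x / μ x) + μ x := by
    intro x
    have hgibbs : ν x ≤ ν x * log (ν x / μ x) + μ x := by
      have := mul_nonneg (hμ0 x).le (klFun_nonneg (div_nonneg (hν0 x) (hμ0 x).le))
      rw [mul_klFun_div (hμ0 x).ne'] at this
      linarith
    split_ifs with hx
    · have hlog : s < log (ν x / μ x) := (lt_log_iff_exp_lt ((exp_pos s).trans hx)).2 hx
      nlinarith [mul_le_mul_of_nonneg_left hlog.le (hν0 x), hμ0 x]
    · linarith [hν0 x]
  calc s * ∑ x with exp s < ν x / μ x, ν x
      = ∑ x, if exp s < ν x / μ x then s * ν x else 0 := by rw [mul_sum, sum_filter]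
    _ ≤ ∑ x, (ν x * log (ν x / μ x) + μ x) := sum_le_sum fun x _ => hterm x
    _ = relEntropy ν μ + 1 := by rw [sum_add_distrib, hμ, relEntropy]

end relEntropy

/-- For `t ≤ 2` the bound holds because `ε ≥ 1`; otherwise the Markov bound
`p ≤ (L + 1) / (L + t / 2)` squares to at most `(L + 2) / (L + t)`. -/
theorem le_of_mul_le_of_sq_eq {L t p ε : ℝ} (hL : 0 ≤ L) (hLt : 0 < L + t) (hp : p ≤ 1)
    (hmarkov : (L + t / 2) * p ≤ L + 1) (hε0 : 0 ≤ ε) (hε : ε ^ 2 = (L + 2) / (L + t)) :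
    p ≤ ε := by
  rcases le_or_gt t 2 with ht | ht
  · have : 1 ≤ ε ^ 2 := by rw [hε, one_le_div hLt]; linarith
    nlinarith
  · have hpos : 0 < L + t / 2 := by linarith
    have hq : p ≤ (L + 1) / (L + t / 2) := by rw [le_div_iff₀ hpos]; linarith
    have hq2 : ((L + 1) / (L + t / 2)) ^ 2 ≤ ε ^ 2 := by
      rw [hε, div_pow, div_le_div_iff₀ (by positivity) hLt]
      nlinarith [mul_nonneg (mul_nonneg hL (sub_nonneg.2 ht.le)) (by linarith : (0 : ℝ) ≤ t + 2),
        mul_nonneg (by linarith : (0 : ℝ) ≤ t) (sub_nonneg.2 ht.le)]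
    exact hq.trans ((pow_le_pow_iff_left₀ (by positivity) hε0 two_ne_zero).1 hq2)

/-- If `L = 0`, Gibbs' equality case `ν = μ` empties the tail; this case cannot be skipped, since
for `L + t = 0` the hypothesis `hε` reads `ε = 0` (division by zero). -/
theorem sum_exp_lt_div_le {μ ν : χ → ℝ} (hμ0 : ∀ x, 0 < μ x) (hν0 : ∀ x, 0 ≤ ν x)
    (hμ : ∑ x, μ x = 1) (hν : ∑ x, ν x = 1) {L t ε : ℝ} (hL : relEntropy ν μ = L) (ht : 0 ≤ t)
    (hε0 : 0 ≤ ε) (hε : ε ^ 2 = (L + 2) / (L + t)) :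
    ∑ x with exp (L + t / 2) < ν x / μ x, ν x ≤ ε := by
  rcases (hL ▸ relEntropy_nonneg hμ0 hν0 hμ hν).eq_or_lt with hL0 | hL0
  · have hνμ : ν = μ := eq_of_relEntropy_eq_zero hμ0 hν0 hμ hν (hL.trans hL0.symm)
    have hbelow : ∀ x, ¬exp (L + t / 2) < ν x / μ x := fun x => by
      rw [hνμ, div_self (hμ0 x).ne', not_lt]
      exact one_le_exp (by linarith)
    rw [filter_false_of_mem fun x _ => hbelow x, sum_empty]
    exact hε0
  · refine le_of_mul_le_of_sq_eq hL0.le (by linarith) ?_ (hL ▸ mul_sum_exp_lt_div_le hμ0 hν0 hμ _)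
      hε0 hε
    exact (sum_le_sum_of_subset_of_nonneg (filter_subset _ _) fun x _ _ => hν0 x).trans hν.le

theorem sqrt_exp_div_le {L t : ℝ} {N : ℕ} (hN : exp (L + t) ≤ N) :
    √(exp (L + t / 2) / N) ≤ exp (-t / 4) := by
  rw [sqrt_le_left (exp_pos _).le, sq, ← exp_add, div_le_iff₀ ((exp_pos _).trans_le hN)]
  calc exp (L + t / 2) = exp (-t / 4 + -t / 4) * exp (L + t) := by rw [← exp_add]; ring_nf
    _ ≤ exp (-t / 4 + -t / 4) * N := by gcongr

end ImportanceSampling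

open ImportanceSampling

/-- Chatterjee–Diaconis bound for importance sampling of `|χ|` with uniform target `ν`
and sampling distribution `μ` on a finite set `χ`: with `ρ(x) = ν(x)/μ(x)`,
`L = D_KL(ν‖μ)`, `t ≥ 0`, `N = ⌈exp(L+t)⌉` and `ε² = (L+2)/(L+t)`, the estimator
`I_N = (1/N) Σ 1/μ(X_i)` from `N` i.i.d. samples satisfies
`E[|I_N − |χ||/|χ|] ≤ e^{−t/4} + 2ε`. -/
theorem importance_sampling_count_error_bound
    {χ : Type*} [Fintype χ] [Nonempty χ]
    (μ : χ → ℝ) (hpos : ∀ x, 0 < μ x) (hsum : ∑ x, μ x = 1)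
    (L t ε : ℝ)
    (hL : L = ∑ x, (1 / Fintype.card χ : ℝ) *
        Real.log ((1 / Fintype.card χ : ℝ) / μ x))
    (ht : 0 ≤ t) (hε0 : 0 ≤ ε) (hε : ε ^ 2 = (L + 2) / (L + t))
    (N : ℕ) (hN : N = ⌈Real.exp (L + t)⌉₊) :
    ∑ X : Fin N → χ, (∏ i, μ (X i)) *
        (|(1 / N : ℝ) * (∑ i, 1 / μ (X i)) - Fintype.card χ| / Fintype.card χ)
      ≤ Real.exp (-t / 4) + 2 * ε := by
  set k : ℝ := (Fintype.card χ : ℝ)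
  set ν : χ → ℝ := fun _ => 1 / k
  have hk : 0 < k := Nat.cast_pos.2 Fintype.card_pos
  have hν0 : ∀ x, 0 ≤ ν x := fun _ => by positivity
  have hν : ∑ x, ν x = 1 := by simp [ν, k]
  have hμν : ∀ x, μ x * (ν x / μ x) = ν x := fun x => mul_div_cancel₀ _ (hpos x).ne'
  have hN0 : N ≠ 0 := by rw [hN]; exact (Nat.ceil_pos.2 (exp_pos _)).ne'
  calc iidExpect μ N (fun X => |(1 / N : ℝ) * (∑ i, 1 / μ (X i)) - k| / k)
      = iidExpect μ N (fun X => |sampleMean (fun x => ν x / μ x) X - 1|) := by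
        simp only [abs_mean_inv_sub_div_eq μ hk, ν]
    _ ≤ √(exp (L + t / 2) / N) + 2 * ∑ x with exp (L + t / 2) < ν x / μ x, ν x := by
        simpa only [hμν] using iidExpect_abs_sampleMean_sub_one_le (fun x => (hpos x).le) hsum
          (fun x => div_nonneg (hν0 x) (hpos x).le) (by simpa only [hμν] using hν)
          (exp_pos _).le hN0
    _ ≤ exp (-t / 4) + 2 * ε := by
        gcongr
        · exact sqrt_exp_div_le (hN ▸ Nat.le_ceil _)
        · exact sum_exp_lt_div_le hpos hν0 hsum hν hL.symm ht hε0 hε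
end

section
/- Let G(X,Y) be a λ-dense bipartite graph (|X| = |Y| = n, every degree greater than (1/2+λ)n, λ ∈ (0,1/2)) with adjacency matrix A, and let Q = D_α A D_β be its doubly stochastic scaling. Then every entry of Q satisfies Q_{ij} ≤ 1/(2λn). -/
/-!
Let `S` be the neighbourhood of row `i` and `T` that of column `j`. For `k ∈ T`, `m ∈ S` the
scaling gives `Q i j * Q k m ≤ Q i m * Q k j`, because `A i m = A k j = 1` while
`A i j * A k m ≤ 1`. Summing over `T × S`, `Q i j` times the mass of the block `T × S` is at most
`(∑ k ∈ T, Q k j) * (∑ m ∈ S, Q i m) ≤ 1`. On the other hand, in a doubly stochastic matrix the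
rows `T` carry mass `|T|`, of which at most `n - |S|` lies outside the columns `S`; so the block
has mass at least `|S| + |T| - n > 2λn`.
-/

open Finset

lemma Finset.natCast_card_filter_eq_one_eq_sum {ι R : Type*} [Fintype ι] [AddCommMonoidWithOne R]
    [DecidableEq R] (f : ι → R) (hf : ∀ x, f x = 0 ∨ f x = 1) :
    (#{x | f x = 1} : R) = ∑ x, f x := by
  rw [natCast_card_filter]
  refine sum_congr rfl fun x _ => ?_
  split_ifs with h
  · exact h.symm
  · exact ((hf x).resolve_right h).symm

section DoublyStochastic

variable {R n : Type*} [Fintype n] [DecidableEq n]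

section Semiring

variable [Semiring R] [PartialOrder R] [IsOrderedRing R] {M : Matrix n n R}

lemma sum_row_le_one_of_mem_doublyStochastic (hM : M ∈ doublyStochastic R n) (i : n)
    (S : Finset n) : ∑ j ∈ S, M i j ≤ 1 :=
  sum_row_of_mem_doublyStochastic hM i ▸
    sum_le_sum_of_subset_of_nonneg (subset_univ S) fun _ _ _ => hM.1 _ _

lemma sum_col_le_one_of_mem_doublyStochastic (hM : M ∈ doublyStochastic R n) (j : n)
    (T : Finset n) : ∑ i ∈ T, M i j ≤ 1 :=
  sum_col_of_mem_doublyStochastic hM j ▸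
    sum_le_sum_of_subset_of_nonneg (subset_univ T) fun _ _ _ => hM.1 _ _

end Semiring

lemma mul_sum_sum_le_one_of_mem_doublyStochastic [CommSemiring R] [PartialOrder R]
    [IsOrderedRing R] {M : Matrix n n R} (hM : M ∈ doublyStochastic R n) {S T : Finset n}
    {i j : n} {c : R} (h : ∀ k ∈ T, ∀ m ∈ S, c * M k m ≤ M i m * M k j) :
    c * ∑ k ∈ T, ∑ m ∈ S, M k m ≤ 1 :=
  calc c * ∑ k ∈ T, ∑ m ∈ S, M k m = ∑ k ∈ T, ∑ m ∈ S, c * M k m := by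
        simp only [mul_sum]
    _ ≤ ∑ k ∈ T, ∑ m ∈ S, M i m * M k j := sum_le_sum fun k hk => sum_le_sum fun m hm => h k hk m hm
    _ = (∑ k ∈ T, M k j) * ∑ m ∈ S, M i m := by
        rw [sum_mul_sum]
        exact sum_congr rfl fun _ _ => sum_congr rfl fun _ _ => mul_comm _ _
    _ ≤ 1 := mul_le_one₀ (sum_col_le_one_of_mem_doublyStochastic hM j T)
        (sum_nonneg fun _ _ => hM.1 _ _) (sum_row_le_one_of_mem_doublyStochastic hM i S)

lemma card_add_card_sub_card_le_sum_sum_of_mem_doublyStochastic [CommRing R] [PartialOrder R]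
    [IsOrderedRing R] {M : Matrix n n R} (hM : M ∈ doublyStochastic R n) (S T : Finset n) :
    (#S + #T : R) - Fintype.card n ≤ ∑ k ∈ T, ∑ m ∈ S, M k m := by
  have hrow (k : n) : ∑ m ∈ S, M k m = 1 - ∑ m ∈ Sᶜ, M k m := by
    rw [← sum_row_of_mem_doublyStochastic hM k, ← sum_add_sum_compl S]
    ring
  have houtside : ∑ k ∈ T, ∑ m ∈ Sᶜ, M k m ≤ #Sᶜ :=
    calc ∑ k ∈ T, ∑ m ∈ Sᶜ, M k m ≤ ∑ k, ∑ m ∈ Sᶜ, M k m :=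
          sum_le_sum_of_subset_of_nonneg (subset_univ T) fun _ _ _ => sum_nonneg fun _ _ => hM.1 _ _
      _ = ∑ m ∈ Sᶜ, ∑ k, M k m := Finset.sum_comm
      _ = #Sᶜ := by simp [sum_col_of_mem_doublyStochastic hM]
  have hcard : (#S + #Sᶜ : R) = Fintype.card n := by
    rw [← Nat.cast_add, card_add_card_compl]
  simp only [hrow, sum_sub_distrib, sum_const, nsmul_one]
  rw [← hcard, show (#S + #T : R) - (#S + #Sᶜ) = #T - #Sᶜ by ring]
  exact sub_le_sub_left houtside _

end DoublyStochastic

lemma scaling_mul_le_mul_of_eq_one {R ι κ : Type*} [CommSemiring R] [PartialOrder R]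
    [IsOrderedRing R] {A Q : Matrix ι κ R} {α : ι → R} {β : κ → R}
    (hQ : ∀ i j, Q i j = α i * A i j * β j) (hα : ∀ i, 0 ≤ α i) (hβ : ∀ j, 0 ≤ β j)
    (hA₀ : ∀ i j, 0 ≤ A i j) (hA₁ : ∀ i j, A i j ≤ 1) {i k : ι} {j m : κ}
    (him : A i m = 1) (hkj : A k j = 1) :
    Q i j * Q k m ≤ Q i m * Q k j := by
  have hscale : 0 ≤ α i * β m * (α k * β j) :=
    mul_nonneg (mul_nonneg (hα i) (hβ m)) (mul_nonneg (hα k) (hβ j))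
  calc Q i j * Q k m = α i * β m * (α k * β j) * (A i j * A k m) := by rw [hQ, hQ]; ring
    _ ≤ α i * β m * (α k * β j) * 1 :=
        mul_le_mul_of_nonneg_left (mul_le_one₀ (hA₁ i j) (hA₀ k m) (hA₁ k m)) hscale
    _ = Q i m * Q k j := by rw [hQ, hQ, him, hkj]; ring

theorem doubly_stochastic_scaling_entry_bound_general
    (n : ℕ) (lam : ℝ) (hlam : 0 < lam)
    (A : Matrix (Fin n) (Fin n) ℝ) (h01 : ∀ i j, A i j = 0 ∨ A i j = 1)
    (hrowdeg : ∀ i, ((1 / 2 + lam) * n : ℝ) < ∑ j, A i j)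
    (hcoldeg : ∀ j, ((1 / 2 + lam) * n : ℝ) < ∑ i, A i j)
    (α β : Fin n → ℝ) (hα : ∀ i, 0 < α i) (hβ : ∀ j, 0 < β j)
    (Q : Matrix (Fin n) (Fin n) ℝ) (hQ : ∀ i j, Q i j = α i * A i j * β j)
    (hrows : ∀ i, ∑ j, Q i j = 1) (hcols : ∀ j, ∑ i, Q i j = 1) :
    ∀ i j, Q i j ≤ 1 / (2 * lam * n) := by
  intro i j
  have hA₀ (k m) : 0 ≤ A k m := by rcases h01 k m with h | h <;> simp [h]
  have hA₁ (k m) : A k m ≤ 1 := by rcases h01 k m with h | h <;> simp [h]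
  have hQ_mem : Q ∈ doublyStochastic ℝ (Fin n) := by
    refine mem_doublyStochastic_iff_sum.2 ⟨fun k m => ?_, hrows, hcols⟩
    rw [hQ]
    exact mul_nonneg (mul_nonneg (hα k).le (hA₀ k m)) (hβ m).le
  set S : Finset (Fin n) := {m | A i m = 1}
  set T : Finset (Fin n) := {k | A k j = 1}
  have hS : (#S : ℝ) = ∑ m, A i m := natCast_card_filter_eq_one_eq_sum _ (h01 i)
  have hT : (#T : ℝ) = ∑ k, A k j := natCast_card_filter_eq_one_eq_sum _ (h01 · j)
  have hblock : 2 * lam * n < ∑ k ∈ T, ∑ m ∈ S, Q k m := by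
    have := card_add_card_sub_card_le_sum_sum_of_mem_doublyStochastic hQ_mem S T
    rw [Fintype.card_fin] at this
    linarith [hrowdeg i, hcoldeg j]
  have hprod : Q i j * ∑ k ∈ T, ∑ m ∈ S, Q k m ≤ 1 :=
    mul_sum_sum_le_one_of_mem_doublyStochastic hQ_mem fun k hk m hm =>
      scaling_mul_le_mul_of_eq_one hQ (fun _ => (hα _).le) (fun _ => (hβ _).le) hA₀ hA₁
        (mem_filter.1 hm).2 (mem_filter.1 hk).2
  have hn : (0 : ℝ) < n := by exact_mod_cast i.pos
  rw [le_div_iff₀ (by positivity)]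
  exact (mul_le_mul_of_nonneg_left hblock.le (hQ_mem.1 i j)).trans hprod

/-- (Huber–Law) Every entry of the doubly stochastic scaling `Q = D_α A D_β` of the
adjacency matrix of a λ-dense bipartite graph is at most `1/(2λn)`. -/
theorem doubly_stochastic_scaling_entry_bound
    (n : ℕ) (lam : ℝ) (hlam : 0 < lam) (hlam' : lam < 1 / 2)
    (A : Matrix (Fin n) (Fin n) ℝ) (h01 : ∀ i j, A i j = 0 ∨ A i j = 1)
    (hrowdeg : ∀ i, ((1 / 2 + lam) * n : ℝ) < ∑ j, A i j)
    (hcoldeg : ∀ j, ((1 / 2 + lam) * n : ℝ) < ∑ i, A i j)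
    (α β : Fin n → ℝ) (hα : ∀ i, 0 < α i) (hβ : ∀ j, 0 < β j)
    (Q : Matrix (Fin n) (Fin n) ℝ) (hQ : ∀ i j, Q i j = α i * A i j * β j)
    (hrows : ∀ i, ∑ j, Q i j = 1) (hcols : ∀ j, ∑ i, Q i j = 1) :
    ∀ i j, Q i j ≤ 1 / (2 * lam * n) :=
  doubly_stochastic_scaling_entry_bound_general n lam hlam A h01 hrowdeg hcoldeg α β hα hβ Q hQ
    hrows hcols
end

section
/- Let G be a λ-dense bipartite graph with adjacency matrix A and doubly stochastic scaling Q = D_α A D_β, and set r_i = n · max_j Q_{ij}. Then (1/n) Σ_{i=1}^n r_i ≤ 1/2 + 1/(4λ). -/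
open Finset

/-!
Let `A i j = 1`, with neighbourhoods `N(i)` (columns) and `N(j)` (rows). The scalings give
`α i * ∑_{N(i)} β = 1` and `β j * ∑_{N(j)} α = 1`, while `Q` carries mass at least
`|N(j)| - |N(i)ᶜ| > 2λn` on the block `N(j) × N(i)`, mass which is at most
`(∑_{N(j)} α) (∑_{N(i)} β)`. Hence every entry of `Q` is at most `1 / (2λn)`, i.e.
`r i ≤ 1 / (2λ)`. For a column `j₀` maximising `β`, every row adjacent to `j₀` attains its
maximum at `j₀`, so these rows contribute exactly `n ∑_i Q i j₀ = n` to `∑ r`; the fewer than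
`(1/2 - λ) n` remaining rows contribute at most `1 / (2λ)` each.
-/

theorem sum_eq_card_filter_eq_one {κ : Type*} [Fintype κ] {a : κ → ℝ}
    (ha : ∀ k, a k = 0 ∨ a k = 1) : ∑ k, a k = #{k | a k = 1} := by
  rw [← sum_boole]
  refine sum_congr rfl fun k _ => ?_
  rcases ha k with h | h <;> simp [h]

theorem card_sub_card_compl_le_sum_sum {m n : Type*} [Fintype m] [Fintype n] [DecidableEq n]
    {Q : Matrix m n ℝ} (hQ : ∀ i j, 0 ≤ Q i j) (hrows : ∀ i, ∑ j, Q i j = 1)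
    (hcols : ∀ j, ∑ i, Q i j = 1) (T : Finset m) (S : Finset n) :
    (#T : ℝ) - #Sᶜ ≤ ∑ i ∈ T, ∑ j ∈ S, Q i j := by
  have hsplit : ∀ i, ∑ j ∈ S, Q i j = 1 - ∑ j ∈ Sᶜ, Q i j := fun i => by
    rw [← hrows i, ← sum_add_sum_compl S]
    ring
  have hcompl : ∑ i ∈ T, ∑ j ∈ Sᶜ, Q i j ≤ #Sᶜ := calc
    _ ≤ ∑ i, ∑ j ∈ Sᶜ, Q i j :=
      sum_le_sum_of_subset_of_nonneg (subset_univ T) fun i _ _ => sum_nonneg fun j _ => hQ i j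
    _ = ∑ j ∈ Sᶜ, ∑ i, Q i j := sum_comm
    _ = #Sᶜ := by simp [hcols]
  rw [sum_congr rfl fun i _ => hsplit i, sum_sub_distrib, sum_const, nsmul_one]
  linarith

section Scaling

variable {m n : Type*} {A Q : Matrix m n ℝ} {α : m → ℝ} {β : n → ℝ}

theorem entry_eq_ite (h01 : ∀ i j, A i j = 0 ∨ A i j = 1)
    (hQ : ∀ i j, Q i j = α i * A i j * β j) (i : m) (j : n) :
    Q i j = if A i j = 1 then α i * β j else 0 := by
  rcases h01 i j with h | h <;> simp [hQ, h]

theorem entry_nonneg (h01 : ∀ i j, A i j = 0 ∨ A i j = 1)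
    (hQ : ∀ i j, Q i j = α i * A i j * β j) (hα : ∀ i, 0 ≤ α i) (hβ : ∀ j, 0 ≤ β j)
    (i : m) (j : n) : 0 ≤ Q i j := by
  rw [entry_eq_ite h01 hQ]
  split_ifs
  exacts [mul_nonneg (hα i) (hβ j), le_rfl]

noncomputable def rowNeighbors [Fintype n] (A : Matrix m n ℝ) (i : m) : Finset n := {k | A i k = 1}

noncomputable def colNeighbors [Fintype m] (A : Matrix m n ℝ) (j : n) : Finset m := {l | A l j = 1}

theorem sum_row_eq_mul_sum_rowNeighbors [Fintype n] (h01 : ∀ i j, A i j = 0 ∨ A i j = 1)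
    (hQ : ∀ i j, Q i j = α i * A i j * β j) (i : m) :
    ∑ k, Q i k = α i * ∑ k ∈ rowNeighbors A i, β k := by
  simp_rw [entry_eq_ite h01 hQ, rowNeighbors, sum_filter, mul_sum, mul_ite, mul_zero]

theorem sum_col_eq_mul_sum_colNeighbors [Fintype m] (h01 : ∀ i j, A i j = 0 ∨ A i j = 1)
    (hQ : ∀ i j, Q i j = α i * A i j * β j) (j : n) :
    ∑ l, Q l j = β j * ∑ l ∈ colNeighbors A j, α l := by
  simp_rw [entry_eq_ite h01 hQ, colNeighbors, sum_filter, mul_sum, mul_ite, mul_zero, mul_comm]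

theorem sup'_row_eq_of_forall_le [Fintype n] (h01 : ∀ i j, A i j = 0 ∨ A i j = 1)
    (hQ : ∀ i j, Q i j = α i * A i j * β j) (hα : ∀ i, 0 ≤ α i) (hβ : ∀ j, 0 ≤ β j)
    {j₀ : n} (hj₀ : ∀ j, β j ≤ β j₀) {i : m} (hi : A i j₀ = 1) (H : (univ : Finset n).Nonempty) :
    univ.sup' H (fun j => Q i j) = Q i j₀ := by
  refine le_antisymm (sup'_le _ _ fun j _ => ?_) (le_sup' _ (mem_univ j₀))
  rw [entry_eq_ite h01 hQ, entry_eq_ite h01 hQ, if_pos hi]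
  split_ifs
  · exact mul_le_mul_of_nonneg_left (hj₀ j) (hα i)
  · exact mul_nonneg (hα i) (hβ j₀)

theorem sum_colNeighbors_sup'_row_eq_one [Fintype m] [Fintype n]
    (h01 : ∀ i j, A i j = 0 ∨ A i j = 1) (hQ : ∀ i j, Q i j = α i * A i j * β j)
    (hα : ∀ i, 0 ≤ α i) (hβ : ∀ j, 0 ≤ β j) (hcols : ∀ j, ∑ i, Q i j = 1)
    {j₀ : n} (hj₀ : ∀ j, β j ≤ β j₀) (H : (univ : Finset n).Nonempty) :
    ∑ i ∈ colNeighbors A j₀, univ.sup' H (fun j => Q i j) = 1 := calc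
  _ = ∑ i ∈ colNeighbors A j₀, Q i j₀ :=
    sum_congr rfl fun i hi => sup'_row_eq_of_forall_le h01 hQ hα hβ hj₀ (mem_filter.1 hi).2 H
  _ = ∑ i, Q i j₀ := sum_filter_of_ne fun i _ hi =>
    by_contra fun h => hi (by rw [entry_eq_ite h01 hQ, if_neg h])
  _ = 1 := hcols j₀

theorem entry_mul_card_sub_card_compl_le_one [Fintype m] [Fintype n] [DecidableEq n]
    (h01 : ∀ i j, A i j = 0 ∨ A i j = 1) (hQ : ∀ i j, Q i j = α i * A i j * β j)
    (hα : ∀ i, 0 ≤ α i) (hβ : ∀ j, 0 ≤ β j)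
    (hrows : ∀ i, ∑ j, Q i j = 1) (hcols : ∀ j, ∑ i, Q i j = 1) (i : m) (j : n) :
    Q i j * (#(colNeighbors A j) - #(rowNeighbors A i)ᶜ) ≤ 1 := by
  rcases h01 i j with h | h
  · simp [hQ, h]
  set T := colNeighbors A j
  set S := rowNeighbors A i
  have hQ0 := entry_nonneg h01 hQ hα hβ
  have hmass : ∑ l ∈ T, ∑ k ∈ S, Q l k ≤ (∑ l ∈ T, α l) * ∑ k ∈ S, β k := by
    rw [sum_mul_sum]
    refine sum_le_sum fun l _ => sum_le_sum fun k _ => ?_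
    rw [entry_eq_ite h01 hQ]
    split_ifs
    exacts [le_rfl, mul_nonneg (hα l) (hβ k)]
  calc Q i j * (#T - #Sᶜ) ≤ Q i j * ∑ l ∈ T, ∑ k ∈ S, Q l k :=
        mul_le_mul_of_nonneg_left (card_sub_card_compl_le_sum_sum hQ0 hrows hcols T S) (hQ0 i j)
    _ ≤ α i * β j * ((∑ l ∈ T, α l) * ∑ k ∈ S, β k) := by
        rw [hQ, h, mul_one]
        exact mul_le_mul_of_nonneg_left hmass (mul_nonneg (hα i) (hβ j))
    _ = (α i * ∑ k ∈ S, β k) * (β j * ∑ l ∈ T, α l) := by ring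
    _ = 1 := by
        rw [← sum_row_eq_mul_sum_rowNeighbors h01 hQ, ← sum_col_eq_mul_sum_colNeighbors h01 hQ,
          hrows, hcols, one_mul]

end Scaling

theorem entry_mul_le_one_of_dense {ι : Type*} [Fintype ι] [DecidableEq ι] {A Q : Matrix ι ι ℝ}
    {α β : ι → ℝ} (h01 : ∀ i j, A i j = 0 ∨ A i j = 1) (hQ : ∀ i j, Q i j = α i * A i j * β j)
    (hα : ∀ i, 0 ≤ α i) (hβ : ∀ j, 0 ≤ β j)
    (hrows : ∀ i, ∑ j, Q i j = 1) (hcols : ∀ j, ∑ i, Q i j = 1) {lam : ℝ}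
    (hrowdeg : ∀ i, (1 / 2 + lam) * Fintype.card ι < #(rowNeighbors A i))
    (hcoldeg : ∀ j, (1 / 2 + lam) * Fintype.card ι < #(colNeighbors A j)) (i j : ι) :
    Q i j * (2 * lam * Fintype.card ι) ≤ 1 := by
  have hcompl : (#(rowNeighbors A i)ᶜ : ℝ) + #(rowNeighbors A i) = Fintype.card ι := by
    exact_mod_cast card_compl_add_card _
  refine le_trans ?_ (entry_mul_card_sub_card_compl_le_one h01 hQ hα hβ hrows hcols i j)
  exact mul_le_mul_of_nonneg_left (by linarith [hrowdeg i, hcoldeg j])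
    (entry_nonneg h01 hQ hα hβ i j)

theorem doubly_stochastic_scaling_row_max_average_bound_general
    (n : ℕ) (hn : 0 < n) (lam : ℝ) (hlam : 0 < lam)
    (A : Matrix (Fin n) (Fin n) ℝ) (h01 : ∀ i j, A i j = 0 ∨ A i j = 1)
    (hrowdeg : ∀ i, ((1 / 2 + lam) * n : ℝ) < ∑ j, A i j)
    (hcoldeg : ∀ j, ((1 / 2 + lam) * n : ℝ) < ∑ i, A i j)
    (α β : Fin n → ℝ) (hα : ∀ i, 0 < α i) (hβ : ∀ j, 0 < β j)
    (Q : Matrix (Fin n) (Fin n) ℝ) (hQ : ∀ i j, Q i j = α i * A i j * β j)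
    (hrows : ∀ i, ∑ j, Q i j = 1) (hcols : ∀ j, ∑ i, Q i j = 1)
    (r : Fin n → ℝ)
    (hr : ∀ i, r i = n * univ.sup' (Finset.univ_nonempty_iff.mpr ⟨⟨0, hn⟩⟩)
        (fun j => Q i j)) :
    (1 / n : ℝ) * ∑ i, r i ≤ 1 / 2 + 1 / (4 * lam) := by
  have hα0 : ∀ i, 0 ≤ α i := fun i => (hα i).le
  have hβ0 : ∀ j, 0 ≤ β j := fun j => (hβ j).le
  have hrowN : ∀ i, (1 / 2 + lam) * n < #(rowNeighbors A i) := fun i =>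
    sum_eq_card_filter_eq_one (h01 i) ▸ hrowdeg i
  have hcolN : ∀ j, (1 / 2 + lam) * n < #(colNeighbors A j) := fun j =>
    sum_eq_card_filter_eq_one (h01 · j) ▸ hcoldeg j
  have hentry : ∀ i j, Q i j * (2 * lam * n) ≤ 1 := by
    simpa using entry_mul_le_one_of_dense h01 hQ hα0 hβ0 hrows hcols
      (by simpa using hrowN) (by simpa using hcolN)
  have hr_le : ∀ i, r i ≤ 1 / (2 * lam) := fun i => by
    obtain ⟨j, -, hj⟩ := exists_mem_eq_sup' (univ_nonempty_iff.mpr ⟨⟨0, hn⟩⟩) (fun j => Q i j)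
    rw [hr, hj, le_div_iff₀ (by positivity)]
    linarith [hentry i j]
  obtain ⟨j₀, -, hj₀⟩ := exists_max_image univ β ⟨⟨0, hn⟩, mem_univ _⟩
  set T := colNeighbors A j₀
  have hsumT : ∑ i ∈ T, r i = n := by
    rw [sum_congr rfl fun i _ => hr i, ← mul_sum,
      sum_colNeighbors_sup'_row_eq_one h01 hQ hα0 hβ0 hcols (fun j => hj₀ j (mem_univ j)), mul_one]
  have hcardTc : (#Tᶜ : ℝ) ≤ (1 / 2 - lam) * n := by
    have : (#Tᶜ : ℝ) + #T = n := by exact_mod_cast (card_compl_add_card T).trans (by simp)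
    linarith [hcolN j₀]
  have hsumTc : ∑ i ∈ Tᶜ, r i ≤ (1 / 2 - lam) * n * (1 / (2 * lam)) := calc
    ∑ i ∈ Tᶜ, r i ≤ #Tᶜ * (1 / (2 * lam)) := by
      simpa using sum_le_card_nsmul Tᶜ r _ fun i _ => hr_le i
    _ ≤ (1 / 2 - lam) * n * (1 / (2 * lam)) := by gcongr
  calc (1 / n : ℝ) * ∑ i, r i = 1 / n * (n + ∑ i ∈ Tᶜ, r i) := by
        rw [← sum_add_sum_compl T, hsumT]
    _ ≤ 1 / n * (n + (1 / 2 - lam) * n * (1 / (2 * lam))) := by gcongr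
    _ = 1 / 2 + 1 / (4 * lam) := by
        field_simp
        ring

/-- For the doubly stochastic scaling `Q = D_α A D_β` of a λ-dense bipartite graph's
adjacency matrix, with `r_i = n · max_j Q_{ij}`, one has `(1/n) Σ_i r_i ≤ 1/2 + 1/(4λ)`. -/
theorem doubly_stochastic_scaling_row_max_average_bound
    (n : ℕ) (hn : 0 < n) (lam : ℝ) (hlam : 0 < lam) (hlam' : lam < 1 / 2)
    (A : Matrix (Fin n) (Fin n) ℝ) (h01 : ∀ i j, A i j = 0 ∨ A i j = 1)
    (hrowdeg : ∀ i, ((1 / 2 + lam) * n : ℝ) < ∑ j, A i j)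
    (hcoldeg : ∀ j, ((1 / 2 + lam) * n : ℝ) < ∑ i, A i j)
    (α β : Fin n → ℝ) (hα : ∀ i, 0 < α i) (hβ : ∀ j, 0 < β j)
    (Q : Matrix (Fin n) (Fin n) ℝ) (hQ : ∀ i j, Q i j = α i * A i j * β j)
    (hrows : ∀ i, ∑ j, Q i j = 1) (hcols : ∀ j, ∑ i, Q i j = 1)
    (r : Fin n → ℝ)
    (hr : ∀ i, r i = n * univ.sup' (Finset.univ_nonempty_iff.mpr ⟨⟨0, hn⟩⟩)
        (fun j => Q i j)) :
    (1 / n : ℝ) * ∑ i, r i ≤ 1 / 2 + 1 / (4 * lam) :=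
  doubly_stochastic_scaling_row_max_average_bound_general n hn lam hlam A h01 hrowdeg hcoldeg α β hα
    hβ Q hQ hrows hcols r hr
end

section
/- Let G(X,Y) be a bipartite graph with |X| = |Y| = n having at least one perfect matching, P its matrix of matching marginals, and Q a nonnegative matrix whose support contains the support of P, with row entries Q_{ij}. For a uniformly random perfect matching M and an independent uniformly random permutation π of [n], E[log p_{π,Q}(M)] ≥ Σ_e P_e log Q_e − Σ_{i,k} P_{ik} E_π[log Σ_{j ≥_π k} Q_{ij}], where p_{π,Q}(M) is the probability that the sequential importance sampler with order π and weight matrix Q outputs M, and j ≥_π k means π⁻¹(j) ≥ π⁻¹(k). -/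
/-!
Replacing each step's set of extendable partners by the larger set of still unmatched partners
only increases the normalising sums, so `log p_{π,Q}(M)` is at least
`∑ₓ log Q x (M x) - ∑ₓ log ∑_{j ≥_σ M x} Q x j` with `σ = M ∘ π`: the vertices still unmatched
when `x` is processed are exactly those `j` with `σ⁻¹ j ≥ σ⁻¹ (M x)`. For fixed `M` the order
`σ` is again uniform, and averaging over `M` turns a sum over the edges of `M` into a sum
weighted by the marginals `P`.
-/

open Finset
open Classical

/-- The probability that the sequential importance sampler with vertex order `π` and
weight matrix `Q` outputs the perfect matching `M` of the bipartite graph with adjacency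
relation `A`: at step `i` it matches vertex `π i`, choosing among the still-extendable
partners `j` with probability proportional to `Q (π i) j`. -/
noncomputable def sisProb (n : ℕ) (A : Fin n → Fin n → Prop)
    (Q : Fin n → Fin n → ℝ) (π M : Equiv.Perm (Fin n)) : ℝ :=
  ∏ i : Fin n,
    (Q (π i) (M (π i)) /
      ∑ j ∈ univ.filter (fun j => ∃ M' : Equiv.Perm (Fin n),
          (∀ l, A l (M' l)) ∧ M' (π i) = j ∧ ∀ l, l < i → M' (π l) = M (π l)),
        Q (π i) j)

/-- `matchingMarginal n A i k` : the probability that the edge `(i, k)` belongs to a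
uniformly random perfect matching. -/
noncomputable def matchingMarginal (n : ℕ) (A : Fin n → Fin n → Prop)
    (i k : Fin n) : ℝ :=
  (Nat.card {M : Equiv.Perm (Fin n) // (∀ l, A l (M l)) ∧ M i = k} : ℝ) /
    (Nat.card {M : Equiv.Perm (Fin n) // ∀ l, A l (M l)} : ℝ)

open Equiv

lemma log_sub_log_sum_le_log_div_sum {ι : Type*} {s t : Finset ι} {w : ι → ℝ} {a : ι}
    (hst : s ⊆ t) (ha : a ∈ s) (hwa : 0 < w a) (hw : ∀ j ∈ t, 0 ≤ w j) :
    Real.log (w a) - Real.log (∑ j ∈ t, w j) ≤ Real.log (w a / ∑ j ∈ s, w j) := by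
  have hs : 0 < ∑ j ∈ s, w j :=
    hwa.trans_le (single_le_sum (fun j hj => hw j (hst hj)) ha)
  rw [Real.log_div hwa.ne' hs.ne']
  exact sub_le_sub_left (Real.log_le_log hs
    (sum_le_sum_of_subset_of_nonneg hst fun j hj _ => hw j hj)) _

abbrev PerfectMatching (n : ℕ) (A : Fin n → Fin n → Prop) : Type :=
  {M : Perm (Fin n) // ∀ l, A l (M l)}

noncomputable def sisExtendable (n : ℕ) (A : Fin n → Fin n → Prop) (π M : Perm (Fin n))
    (i : Fin n) : Finset (Fin n) :=
  univ.filter (fun j => ∃ M' : Perm (Fin n),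
    (∀ l, A l (M' l)) ∧ M' (π i) = j ∧ ∀ l, l < i → M' (π l) = M (π l))

noncomputable def tailWeight {n : ℕ} (Q : Fin n → Fin n → ℝ) (σ : Perm (Fin n))
    (x k : Fin n) : ℝ :=
  ∑ j ∈ univ.filter (fun j => σ.symm k ≤ σ.symm j), Q x j

section

variable {n : ℕ} (A : Fin n → Fin n → Prop)

lemma sisProb_eq_prod_sisExtendable (Q : Fin n → Fin n → ℝ) (π M : Perm (Fin n)) :
    sisProb n A Q π M = ∏ i, Q (π i) (M (π i)) / ∑ j ∈ sisExtendable n A π M i, Q (π i) j :=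
  rfl

lemma sisExtendable_subset_tail (π M : Perm (Fin n)) (i : Fin n) :
    sisExtendable n A π M i ⊆
      univ.filter (fun j => (π.trans M).symm (M (π i)) ≤ (π.trans M).symm j) := by
  intro j hj
  obtain ⟨M', -, hM'i, hagree⟩ := (mem_filter.mp hj).2
  simp only [mem_filter, mem_univ, true_and, symm_trans_apply, symm_apply_apply]
  by_contra! hlt
  -- the partner `j` was already used by `M'` at the earlier step `π⁻¹ (M⁻¹ j)`
  have : M' (π (π.symm (M.symm j))) = M' (π i) := by
    rw [hagree _ hlt, hM'i, apply_symm_apply, apply_symm_apply]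
  exact hlt.ne (π.injective (M'.injective this))

lemma sum_log_sub_log_tailWeight_le_log_sisProb {Q : Fin n → Fin n → ℝ}
    (hQ0 : ∀ i j, 0 ≤ Q i j) (π : Perm (Fin n)) (M : PerfectMatching n A)
    (hQM : ∀ x, 0 < Q x (M.1 x)) :
    ∑ x, (Real.log (Q x (M.1 x)) - Real.log (tailWeight Q (π.trans M.1) x (M.1 x)))
      ≤ Real.log (sisProb n A Q π M.1) := by
  have hmem : ∀ i, M.1 (π i) ∈ sisExtendable n A π M.1 i := fun i =>
    mem_filter.mpr ⟨mem_univ _, M.1, M.2, rfl, fun _ _ => rfl⟩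
  have hpos : ∀ i, 0 < Q (π i) (M.1 (π i)) / ∑ j ∈ sisExtendable n A π M.1 i, Q (π i) j :=
    fun i => div_pos (hQM _) ((hQM _).trans_le (single_le_sum (fun j _ => hQ0 _ j) (hmem i)))
  rw [sisProb_eq_prod_sisExtendable, Real.log_prod fun i _ => (hpos i).ne', ← sum_comp π]
  exact sum_le_sum fun i _ => log_sub_log_sum_le_log_div_sum
    (sisExtendable_subset_tail A π M.1 i) (hmem i) (hQM _) fun j _ => hQ0 _ j

lemma sum_perfectMatching_apply_eq (x : Fin n) (g : Fin n → ℝ) :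
    ∑ M : PerfectMatching n A, g (M.1 x)
      = ∑ k, (Nat.card {M : Perm (Fin n) // (∀ l, A l (M l)) ∧ M x = k} : ℝ) * g k := by
  rw [← sum_fiberwise univ (fun M : PerfectMatching n A => M.1 x)]
  refine sum_congr rfl fun k _ => ?_
  rw [sum_congr rfl fun M hM => by rw [(mem_filter.mp hM).2], sum_const, nsmul_eq_mul,
    ← Fintype.card_subtype, ← Nat.card_eq_fintype_card,
    Nat.card_congr (subtypeSubtypeEquivSubtypeInter _ fun M : Perm (Fin n) => M x = k)]

lemma sum_perfectMatching_div_card_eq_sum_matchingMarginal (h : Fin n → Fin n → ℝ) :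
    (∑ M : PerfectMatching n A, ∑ x, h x (M.1 x)) / Nat.card (PerfectMatching n A)
      = ∑ x, ∑ k, matchingMarginal n A x k * h x k := by
  rw [sum_comm, sum_div]
  refine sum_congr rfl fun x _ => ?_
  rw [sum_perfectMatching_apply_eq, sum_div]
  refine sum_congr rfl fun k _ => ?_
  rw [matchingMarginal]
  ring

lemma sum_matchingMarginal_mul_log_sub_eq_average (Q : Fin n → Fin n → ℝ) :
    (∑ i, ∑ k, matchingMarginal n A i k * Real.log (Q i k)) -
        (∑ i, ∑ k, matchingMarginal n A i k *
          ((1 / (n.factorial : ℝ)) * ∑ σ : Perm (Fin n), Real.log (tailWeight Q σ i k)))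
      = (1 / ((Nat.card (PerfectMatching n A) * n.factorial : ℕ) : ℝ)) *
          ∑ M : PerfectMatching n A, ∑ x, ∑ σ : Perm (Fin n),
            (Real.log (Q x (M.1 x)) - Real.log (tailWeight Q σ x (M.1 x))) := by
  calc _ = (1 / (n.factorial : ℝ)) * ∑ x, ∑ k, matchingMarginal n A x k *
          ∑ σ : Perm (Fin n), (Real.log (Q x k) - Real.log (tailWeight Q σ x k)) := by
        rw [mul_sum, ← sum_sub_distrib]
        refine sum_congr rfl fun x _ => ?_
        rw [mul_sum, ← sum_sub_distrib]
        refine sum_congr rfl fun k _ => ?_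
        rw [sum_sub_distrib, sum_const, card_univ, Fintype.card_perm, Fintype.card_fin,
          nsmul_eq_mul]
        field_simp
    _ = _ := by
        rw [← sum_perfectMatching_div_card_eq_sum_matchingMarginal, Nat.cast_mul]
        ring

lemma matchingMarginal_apply_ne_zero (M : PerfectMatching n A) (x : Fin n) :
    matchingMarginal n A x (M.1 x) ≠ 0 := by
  have : Nonempty {M' : Perm (Fin n) // (∀ l, A l (M' l)) ∧ M' x = M.1 x} :=
    ⟨⟨M.1, M.2, rfl⟩⟩
  have : Nonempty (PerfectMatching n A) := ⟨M⟩
  exact div_ne_zero (Nat.cast_ne_zero.mpr Nat.card_pos.ne') (Nat.cast_ne_zero.mpr Nat.card_pos.ne')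

end

theorem sis_log_prob_lower_bound_general
    (n : ℕ) (A : Fin n → Fin n → Prop)
    (Q : Fin n → Fin n → ℝ) (hQ0 : ∀ i j, 0 ≤ Q i j)
    (hsupp : ∀ i k, matchingMarginal n A i k ≠ 0 → Q i k ≠ 0) :
    (∑ i, ∑ k, matchingMarginal n A i k * Real.log (Q i k)) -
        (∑ i, ∑ k, matchingMarginal n A i k *
          ((1 / (n.factorial : ℝ)) * ∑ π : Equiv.Perm (Fin n),
            Real.log (∑ j ∈ univ.filter (fun j => π.symm k ≤ π.symm j), Q i j)))
      ≤ (1 / ((Nat.card {M : Equiv.Perm (Fin n) // ∀ l, A l (M l)} *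
            n.factorial : ℕ) : ℝ)) *
          ∑ M : {M : Equiv.Perm (Fin n) // ∀ l, A l (M l)},
            ∑ π : Equiv.Perm (Fin n), Real.log (sisProb n A Q π M.1) := by
  have hQM : ∀ (M : PerfectMatching n A) x, 0 < Q x (M.1 x) := fun M x =>
    (hQ0 _ _).lt_of_ne' (hsupp _ _ (matchingMarginal_apply_ne_zero A M x))
  refine (sum_matchingMarginal_mul_log_sub_eq_average A Q).trans_le ?_
  calc _ = (1 / ((Nat.card (PerfectMatching n A) * n.factorial : ℕ) : ℝ)) *
          ∑ M : PerfectMatching n A, ∑ π : Perm (Fin n),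
            ∑ x, (Real.log (Q x (M.1 x)) - Real.log (tailWeight Q (π.trans M.1) x (M.1 x))) := by
        refine congrArg _ (sum_congr rfl fun M _ => ?_)
        exact (sum_congr rfl fun x _ => (sum_comp (Equiv.mulLeft M.1) _).symm).trans sum_comm
    _ ≤ _ := by
        gcongr with M _ π _
        exact sum_log_sub_log_tailWeight_le_log_sisProb A hQ0 π M (hQM M)

/-- Key inequality for sequential importance sampling: for a uniformly random perfect
matching `M` and an independent uniformly random order `π`,
`E[log p_{π,Q}(M)] ≥ Σ_e P_e log Q_e − Σ_{i,k} P_{ik} E_π[log Σ_{j ≥_π k} Q_{ij}]`,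
where `j ≥_π k` means `π⁻¹ j ≥ π⁻¹ k`. -/
theorem sis_log_prob_lower_bound
    (n : ℕ) (A : Fin n → Fin n → Prop)
    (hPM : Nonempty {M : Equiv.Perm (Fin n) // ∀ l, A l (M l)})
    (Q : Fin n → Fin n → ℝ) (hQ0 : ∀ i j, 0 ≤ Q i j)
    (hsupp : ∀ i k, matchingMarginal n A i k ≠ 0 → Q i k ≠ 0) :
    (∑ i, ∑ k, matchingMarginal n A i k * Real.log (Q i k)) -
        (∑ i, ∑ k, matchingMarginal n A i k *
          ((1 / (n.factorial : ℝ)) * ∑ π : Equiv.Perm (Fin n),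
            Real.log (∑ j ∈ univ.filter (fun j => π.symm k ≤ π.symm j), Q i j)))
      ≤ (1 / ((Nat.card {M : Equiv.Perm (Fin n) // ∀ l, A l (M l)} *
            n.factorial : ℕ) : ℝ)) *
          ∑ M : {M : Equiv.Perm (Fin n) // ∀ l, A l (M l)},
            ∑ π : Equiv.Perm (Fin n), Real.log (sisProb n A Q π M.1) :=
  sis_log_prob_lower_bound_general n A Q hQ0 hsupp
end
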